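/- arXiv:2004.05963 — 9 statements merged into one kernel-verified Lean document; each statement's English description precedes it below -/
import Mathlib

section
/- Let n ≥ 1, let f : ℝⁿ → ℝ be convex and Lipschitz with constant D̂ ≥ 0, and let μ be the uniform probability measure on the closed Euclidean ball of radius √(n+2) centered at the origin in ℝⁿ. For β > 0 define the smoothed function f_β(x) = ∫ f(x + βξ) dμ(ξ). Then for every x ∈ ℝⁿ one has f(x) ≤ f_β(x) ≤ f(x) + β·D̂·√(n+2). -/
open MeasureTheory Metric ProbabilityTheory

/-!
The uniform measure on a centred ball is invariant under `ξ ↦ -ξ`, so it has mean zero and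
Jensen's inequality gives `f x ≤ f_β x`. On the ball, `|f (x + β ξ) - f x| ≤ D β ‖ξ‖ ≤ D β √(n+2)`,
which integrates to the upper bound.
-/

theorem MeasureTheory.Measure.isNegInvariant_cond {E : Type*} [AddGroup E] [MeasurableSpace E]
    [MeasurableNeg E] (μ : Measure E) [μ.IsNegInvariant] {s : Set E} (hs : -s = s) :
    (μ[|s]).IsNegInvariant := by
  have hrestrict : (μ.restrict s).map Neg.neg = μ.restrict s := by
    conv_lhs => rw [← hs, ← Set.neg_preimage]
    rw [← measurableEmbedding_neg.restrict_map, Measure.map_neg_eq_self]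
  constructor
  rw [Measure.neg, ProbabilityTheory.cond, Measure.map_smul, hrestrict]

theorem integral_id_eq_zero_of_isNegInvariant {E : Type*} [NormedAddCommGroup E]
    [NormedSpace ℝ E] [MeasurableSpace E] [BorelSpace E] (μ : Measure E) [μ.IsNegInvariant] :
    ∫ x, x ∂μ = 0 := by
  have h : ∫ x, x ∂μ = -∫ x, x ∂μ :=
    (integral_neg_eq_self (fun x => x) μ).symm.trans (integral_neg fun x => x)
  rw [eq_neg_iff_add_eq_zero, ← two_smul ℝ] at h
  simpa using h

section

variable {α E : Type*} [MeasurableSpace α] [NormedAddCommGroup E] {μ : Measure α}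
  {f : E → ℝ} {g : α → E}

theorem LipschitzWith.integrable_comp_add [IsFiniteMeasure μ] {K : NNReal}
    (hf : LipschitzWith K f) (hg : Integrable g μ) (x : E) :
    Integrable (fun a => f (x + g a)) μ := by
  refine ((integrable_const ‖f x‖).add (hg.norm.const_mul K)).mono'
    (hf.continuous.comp_aestronglyMeasurable (hg.1.const_add x))
    (Filter.Eventually.of_forall fun a => ?_)
  calc ‖f (x + g a)‖ ≤ ‖f x‖ + ‖f (x + g a) - f x‖ := norm_le_norm_add_norm_sub' _ _
    _ ≤ ‖f x‖ + K * ‖g a‖ := by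
      gcongr
      simpa only [dist_eq_norm, add_sub_cancel_left] using hf.dist_le_mul (x + g a) x

theorem LipschitzWith.integral_comp_add_le [IsProbabilityMeasure μ] {K : NNReal}
    (hf : LipschitzWith K f) {r : ℝ} (hgr : ∀ᵐ a ∂μ, ‖g a‖ ≤ r) (x : E)
    (hfg : Integrable (fun a => f (x + g a)) μ) :
    ∫ a, f (x + g a) ∂μ ≤ f x + K * r := by
  have hbound : ∀ᵐ a ∂μ, f (x + g a) ≤ f x + K * r := by
    filter_upwards [hgr] with a ha
    have h := hf.dist_le_mul (x + g a) x
    rw [dist_eq_norm, dist_eq_norm, add_sub_cancel_left, Real.norm_eq_abs] at h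
    linarith [(abs_le.1 h).2, mul_le_mul_of_nonneg_left ha K.coe_nonneg]
  simpa using integral_mono_ae hfg (integrable_const _) hbound

theorem ConvexOn.le_integral_comp_add [NormedSpace ℝ E] [CompleteSpace E] [IsProbabilityMeasure μ]
    (hf : ConvexOn ℝ Set.univ f) (hfc : Continuous f) (hg : Integrable g μ)
    (hg0 : ∫ a, g a ∂μ = 0) (x : E) (hfg : Integrable (fun a => f (x + g a)) μ) :
    f x ≤ ∫ a, f (x + g a) ∂μ := by
  have h := hf.map_integral_le hfc.continuousOn isClosed_univ
    (Filter.Eventually.of_forall fun a => Set.mem_univ (x + g a)) ((integrable_const x).add hg) hfg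
  rwa [integral_add (integrable_const x) hg, hg0, integral_const, probReal_univ, one_smul,
    add_zero] at h

end

theorem stmt_0_general (n : ℕ)
    (f : EuclideanSpace ℝ (Fin n) → ℝ)
    (D : ℝ) (hD : 0 ≤ D)
    (hconv : ConvexOn ℝ Set.univ f)
    (hlip : ∀ x y, |f x - f y| ≤ D * ‖x - y‖)
    (μ : Measure (EuclideanSpace ℝ (Fin n)))
    (hμ : μ = (volume (closedBall (0 : EuclideanSpace ℝ (Fin n)) (Real.sqrt (n + 2))))⁻¹ •
        volume.restrict (closedBall (0 : EuclideanSpace ℝ (Fin n)) (Real.sqrt (n + 2))))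
    (β : ℝ) (hβ : 0 < β) (x : EuclideanSpace ℝ (Fin n)) :
    f x ≤ ∫ ξ, f (x + β • ξ) ∂μ ∧
      ∫ ξ, f (x + β • ξ) ∂μ ≤ f x + β * D * Real.sqrt (n + 2) := by
  set r := Real.sqrt (n + 2)
  have hr : 0 < r := Real.sqrt_pos.2 (by positivity)
  set B := closedBall (0 : EuclideanSpace ℝ (Fin n)) r
  rw [← ProbabilityTheory.cond] at hμ
  subst hμ
  have : IsProbabilityMeasure (volume[|B]) :=
    cond_isProbabilityMeasure_of_finite (measure_closedBall_pos volume 0 hr).ne'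
      measure_closedBall_lt_top.ne
  have : (volume[|B]).IsNegInvariant := volume.isNegInvariant_cond (by simp [B, neg_closedBall])
  have hbound : ∀ᵐ ξ ∂volume[|B], ‖β • ξ‖ ≤ β * r := by
    filter_upwards [ae_cond_mem measurableSet_closedBall] with ξ hξ
    rw [norm_smul, Real.norm_of_nonneg hβ.le]
    gcongr
    simpa [B] using hξ
  have hg : Integrable (fun ξ => β • ξ) (volume[|B]) :=
    Integrable.of_bound (by fun_prop) (β * r) hbound
  have hf : LipschitzWith D.toNNReal f := LipschitzWith.of_dist_le_mul fun a b => by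
    simpa [Real.dist_eq, dist_eq_norm, Real.coe_toNNReal _ hD] using hlip a b
  have hfg := hf.integrable_comp_add hg x
  constructor
  · refine hconv.le_integral_comp_add hf.continuous hg ?_ x hfg
    rw [integral_smul, integral_id_eq_zero_of_isNegInvariant, smul_zero]
  · have h := hf.integral_comp_add_le hbound x hfg
    rw [Real.coe_toNNReal _ hD] at h
    linarith

/-- Lemma 1-(1) (Duchi et al.): the uniform smoothing of a convex `D`-Lipschitz
function over the ball of radius `√(n+2)` satisfies
`f x ≤ f_β x ≤ f x + β * D * √(n+2)`. -/
theorem stmt_0 (n : ℕ) (hn : 1 ≤ n)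
    (f : EuclideanSpace ℝ (Fin n) → ℝ)
    (D : ℝ) (hD : 0 ≤ D)
    (hconv : ConvexOn ℝ Set.univ f)
    (hlip : ∀ x y, |f x - f y| ≤ D * ‖x - y‖)
    (μ : Measure (EuclideanSpace ℝ (Fin n)))
    (hμ : μ = (volume (closedBall (0 : EuclideanSpace ℝ (Fin n)) (Real.sqrt (n + 2))))⁻¹ •
        volume.restrict (closedBall (0 : EuclideanSpace ℝ (Fin n)) (Real.sqrt (n + 2))))
    (β : ℝ) (hβ : 0 < β) (x : EuclideanSpace ℝ (Fin n)) :
    f x ≤ ∫ ξ, f (x + β • ξ) ∂μ ∧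
      ∫ ξ, f (x + β • ξ) ∂μ ≤ f x + β * D * Real.sqrt (n + 2) :=
  stmt_0_general n f D hD hconv hlip μ hμ β hβ x
end

section
/- Let N ≥ 1, n ≥ 1, and let A be a 2N×2N real column stochastic matrix (every column sums to 1). Let M be the 2N×2N matrix whose first N rows have all entries equal to 1/N and whose last N rows are zero, and suppose there exist Γ > 0 and γ ∈ (0,1) such that |(A^k)_{ij} − M_{ij}| ≤ Γγ^k for all k ≥ 1 and all i,j. Let g : ℕ → (Fin 2N → ℝⁿ) satisfy g_k^i = 0 for all N+1 ≤ i ≤ 2N and all k, and let z : ℕ → (Fin 2N → ℝⁿ) satisfy the recursion z_{k+1}^i = Σ_{j=1}^{2N} A_{ij} z_k^j + g_k^i. Set ς = max_{1 ≤ i ≤ 2N} ‖z_0^i‖, G_k = Σ_{j=1}^{N} ‖g_k^j‖, and z̄_k = (1/N) Σ_{i=1}^{2N} z_k^i. Then for all k ≥ 1 and all 1 ≤ i ≤ N: ‖z_k^i − z̄_k‖ ≤ 2NςΓγ^k + Γ Σ_{r=1}^{k−1} γ^{k−r} G_{r−1} + G_{k−1}. -/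
/-!
Write `M` for the matrix whose rows `i < N` are constantly `1/N` and whose other rows vanish,
so that `z̄_k = (M z_k)^i` for `i < N`. Since every column of `A` sums to `1`, `M A = M`, hence
`M A^r = M`. Unrolling the recursion, `z_k = A^k z_0 + Σ_{r<k} A^r g_{k-1-r}`, so
`z_k - M z_k = (A^k - M) z_0 + Σ_{r<k} (A^r - M) g_{k-1-r}`. Each term of row `i` is then bounded
entrywise: by `Γγ^r` for `r ≥ 1`, and by `1` for `r = 0`; as `g_k` vanishes outside the first `N`
entries, `Σ_j ‖g_k^j‖ = G_k`.
-/

open Finset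

namespace Matrix

variable {m ι κ R E : Type*} [Fintype ι]

def smulVec [SMul R E] [AddCommMonoid E] (A : Matrix m ι R) (v : ι → E) : m → E :=
  fun i => ∑ j, A i j • v j

section Algebra

variable [Semiring R] [AddCommMonoid E] [Module R E]

theorem smulVec_add (A : Matrix m ι R) (v w : ι → E) :
    A.smulVec (v + w) = A.smulVec v + A.smulVec w := by
  ext i
  simp [smulVec, smul_add, sum_add_distrib]

theorem smulVec_sum {α : Type*} (A : Matrix m ι R) (s : Finset α) (v : α → ι → E) :
    A.smulVec (∑ a ∈ s, v a) = ∑ a ∈ s, A.smulVec (v a) := by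
  ext i
  simp only [smulVec, Finset.sum_apply, Finset.smul_sum]
  exact Finset.sum_comm

theorem one_smulVec [DecidableEq ι] (v : ι → E) : (1 : Matrix ι ι R).smulVec v = v := by
  ext i
  simp [smulVec, Matrix.one_apply]

theorem mul_smulVec [Fintype κ] (A : Matrix m ι R) (B : Matrix ι κ R) (v : κ → E) :
    (A * B).smulVec v = A.smulVec (B.smulVec v) := by
  ext i
  simp only [smulVec, Matrix.mul_apply, Finset.sum_smul, Finset.smul_sum, smul_smul]
  exact Finset.sum_comm

theorem replicateCol_smulVec_apply (w : m → R) (v : ι → E) (i : m) :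
    (replicateCol ι w).smulVec v i = w i • ∑ j, v j := by
  simp [smulVec, replicateCol_apply, Finset.smul_sum]

theorem replicateCol_mul_of_sum_col_eq_one [Fintype m] (w : m → R) {A : Matrix m κ R}
    (hA : ∀ j, ∑ i, A i j = 1) : replicateCol m w * A = replicateCol κ w := by
  ext i j
  simp [Matrix.mul_apply, replicateCol_apply, ← Finset.mul_sum, hA j]

end Algebra

theorem sub_smulVec [Ring R] [AddCommGroup E] [Module R E] (A B : Matrix m ι R) (v : ι → E) :
    (A - B).smulVec v = A.smulVec v - B.smulVec v := by
  ext i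
  simp [smulVec, sub_smul]

end Matrix

open Matrix

section Recursion

variable {ι R E : Type*} [Fintype ι] [DecidableEq ι] [Ring R] [AddCommGroup E] [Module R E]
  {A M : Matrix ι ι R} {g z : ℕ → ι → E}

theorem eq_pow_smulVec_add_sum_of_recursion (hz : ∀ k, z (k + 1) = A.smulVec (z k) + g k)
    (k : ℕ) : z k = (A ^ k).smulVec (z 0) + ∑ r ∈ range k, (A ^ r).smulVec (g (k - 1 - r)) := by
  induction k with
  | zero => simp [one_smulVec]
  | succ k ih =>
    rw [hz, ih, smulVec_add, smulVec_sum, sum_range_succ' _ k, ← mul_smulVec, ← pow_succ',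
      pow_zero, one_smulVec, Nat.add_sub_cancel, Nat.sub_zero, add_assoc]
    congr 2
    refine sum_congr rfl fun r _ => ?_
    rw [← mul_smulVec, ← pow_succ', show k - (r + 1) = k - 1 - r by omega]

theorem mul_pow_eq_of_mul_eq (hMA : M * A = M) (k : ℕ) : M * A ^ k = M := by
  induction k with
  | zero => simp
  | succ k ih => rw [pow_succ, ← mul_assoc, ih, hMA]

theorem sub_smulVec_eq_of_recursion (hMA : M * A = M)
    (hz : ∀ k, z (k + 1) = A.smulVec (z k) + g k) (k : ℕ) :
    z k - M.smulVec (z k) =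
      (A ^ k - M).smulVec (z 0) + ∑ r ∈ range k, (A ^ r - M).smulVec (g (k - 1 - r)) := by
  have hM : M.smulVec (z k) = M.smulVec (z 0) + ∑ r ∈ range k, M.smulVec (g (k - 1 - r)) := by
    conv_lhs => rw [eq_pow_smulVec_add_sum_of_recursion hz k]
    simp only [smulVec_add, smulVec_sum, ← mul_smulVec, mul_pow_eq_of_mul_eq hMA]
  rw [hM, eq_pow_smulVec_add_sum_of_recursion hz k]
  simp only [sub_smulVec, sum_sub_distrib]
  abel

end Recursion

section Bounds

variable {m ι E : Type*} [Fintype ι] [SeminormedAddCommGroup E] [NormedSpace ℝ E]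

theorem norm_smulVec_apply_le {B : Matrix m ι ℝ} {i : m} {c : ℝ} (hB : ∀ j, |B i j| ≤ c)
    (v : ι → E) : ‖B.smulVec v i‖ ≤ c * ∑ j, ‖v j‖ := by
  rw [mul_sum]
  refine (norm_sum_le _ _).trans (sum_le_sum fun j _ => ?_)
  rw [norm_smul, Real.norm_eq_abs]
  exact mul_le_mul_of_nonneg_right (hB j) (norm_nonneg _)

theorem norm_sub_smulVec_apply_le_of_recursion [DecidableEq ι] {A M : Matrix ι ι ℝ}
    {g z : ℕ → ι → E} (hMA : M * A = M) (hz : ∀ k, z (k + 1) = A.smulVec (z k) + g k)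
    {i : ι} {b : ℕ → ℝ} (hb : ∀ r j, |(A ^ r - M) i j| ≤ b r) (k : ℕ) :
    ‖z k i - M.smulVec (z k) i‖ ≤
      b k * ∑ j, ‖z 0 j‖ + ∑ r ∈ range k, b r * ∑ j, ‖g (k - 1 - r) j‖ := by
  rw [← Pi.sub_apply, sub_smulVec_eq_of_recursion hMA hz, Pi.add_apply, Finset.sum_apply]
  refine (norm_add_le _ _).trans (add_le_add (norm_smulVec_apply_le (hb k) _) ?_)
  exact (norm_sum_le _ _).trans (sum_le_sum fun r _ => norm_smulVec_apply_le (hb r) _)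

end Bounds

theorem sum_range_ite_mul_eq_add_sum_Icc {k : ℕ} (hk : 1 ≤ k) (Γ γ : ℝ) (G : ℕ → ℝ) :
    ∑ r ∈ range k, (if r = 0 then 1 else Γ * γ ^ r) * G (k - 1 - r) =
      G (k - 1) + Γ * ∑ r ∈ Icc 1 (k - 1), γ ^ (k - r) * G (r - 1) := by
  obtain ⟨k, rfl⟩ := Nat.exists_eq_add_of_le' hk
  rw [sum_range_succ', add_comm, Nat.add_sub_cancel, mul_sum]
  simp only [if_pos, one_mul, Nat.sub_zero, Nat.add_one_ne_zero, if_false]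
  congr 1
  refine sum_nbij' (fun r => k - r) (fun r => k - r) ?_ ?_ ?_ ?_ fun r hr => ?_
  iterate 4 · intro r hr; simp only [mem_range, mem_Icc] at hr ⊢; omega
  rw [mem_range] at hr
  rw [show k + 1 - (k - r) = r + 1 by omega, show k - r - 1 = k - (r + 1) by omega, mul_assoc]

theorem stmt_2_general (N n : ℕ)
    (A : Matrix (Fin (2 * N)) (Fin (2 * N)) ℝ)
    (hcol : ∀ j, ∑ i, A i j = 1)
    (Γ γ : ℝ)
    (hA : ∀ k : ℕ, 1 ≤ k → ∀ i j : Fin (2 * N),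
      |(A ^ k) i j - (if (i : ℕ) < N then (N : ℝ)⁻¹ else 0)| ≤ Γ * γ ^ k)
    (g z : ℕ → Fin (2 * N) → EuclideanSpace ℝ (Fin n))
    (hg : ∀ k : ℕ, ∀ i : Fin (2 * N), N ≤ (i : ℕ) → g k i = 0)
    (hz : ∀ k : ℕ, ∀ i : Fin (2 * N), z (k + 1) i = (∑ j, A i j • z k j) + g k i)
    (ς : ℝ) (hς : IsGreatest (Set.range fun i : Fin (2 * N) => ‖z 0 i‖) ς)
    (G : ℕ → ℝ)
    (hG : ∀ k, G k = ∑ j ∈ univ.filter (fun j : Fin (2 * N) => (j : ℕ) < N), ‖g k j‖)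
    (zbar : ℕ → EuclideanSpace ℝ (Fin n))
    (hzbar : ∀ k, zbar k = (N : ℝ)⁻¹ • ∑ i, z k i) :
    ∀ k : ℕ, 1 ≤ k → ∀ i : Fin (2 * N), (i : ℕ) < N →
      ‖z k i - zbar k‖ ≤ 2 * N * ς * Γ * γ ^ k
        + Γ * ∑ r ∈ Icc 1 (k - 1), γ ^ (k - r) * G (r - 1) + G (k - 1) := by
  intro k hk i hi
  set M := replicateCol (Fin (2 * N)) fun l : Fin (2 * N) => if (l : ℕ) < N then (N : ℝ)⁻¹ else 0
  have hzbar_eq : zbar k = M.smulVec (z k) i := by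
    rw [replicateCol_smulVec_apply, hzbar, if_pos hi]
  have hrow : ∀ r j, |(A ^ r - M) i j| ≤ if r = 0 then 1 else Γ * γ ^ r := by
    intro r j
    rcases Nat.eq_zero_or_pos r with rfl | hr
    · have := Nat.cast_inv_le_one (α := ℝ) N
      have := inv_nonneg.mpr (Nat.cast_nonneg (α := ℝ) N)
      simp only [M, pow_zero, Matrix.sub_apply, replicateCol_apply, hi, one_apply]
      split_ifs <;> rw [abs_le] <;> constructor <;> linarith
    · simpa [hr.ne', M, replicateCol_apply] using hA r hr i j
  have hz0 : ∑ j, ‖z 0 j‖ ≤ 2 * N * ς := by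
    simpa [mul_comm] using sum_le_sum fun j (_ : j ∈ univ) => hς.2 ⟨j, rfl⟩
  have hGsum : ∀ m, ∑ j, ‖g m j‖ = G m := fun m => by
    rw [hG, sum_filter_of_ne fun j _ hj => ?_]
    by_contra hjN
    exact hj (by rw [hg m j (not_lt.mp hjN), norm_zero])
  have hbound := norm_sub_smulVec_apply_le_of_recursion
    (replicateCol_mul_of_sum_col_eq_one _ hcol) (fun k => funext (hz k)) hrow k
  rw [← hzbar_eq, if_neg (by omega)] at hbound
  simp only [hGsum, sum_range_ite_mul_eq_add_sum_Icc hk] at hbound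
  have hΓγ : 0 ≤ Γ * γ ^ k := (abs_nonneg _).trans ((hrow k i).trans_eq (if_neg (by omega)))
  linarith [mul_le_mul_of_nonneg_left hz0 hΓγ]

/-- Lemma 3-(1): consensus bound `‖z_k^i − z̄_k‖ ≤ 2NςΓγ^k + Γ Σ_{r=1}^{k−1} γ^{k−r} G_{r−1} + G_{k−1}`
for the first `N` coordinates of the augmented dynamics `z_{k+1} = A z_k + g_k`. -/
theorem stmt_2 (N n : ℕ) (hN : 1 ≤ N) (hn : 1 ≤ n)
    (A : Matrix (Fin (2 * N)) (Fin (2 * N)) ℝ)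
    (hcol : ∀ j, ∑ i, A i j = 1)
    (Γ γ : ℝ) (hΓ : 0 < Γ) (hγ : γ ∈ Set.Ioo (0 : ℝ) 1)
    (hA : ∀ k : ℕ, 1 ≤ k → ∀ i j : Fin (2 * N),
      |(A ^ k) i j - (if (i : ℕ) < N then (N : ℝ)⁻¹ else 0)| ≤ Γ * γ ^ k)
    (g z : ℕ → Fin (2 * N) → EuclideanSpace ℝ (Fin n))
    (hg : ∀ k : ℕ, ∀ i : Fin (2 * N), N ≤ (i : ℕ) → g k i = 0)
    (hz : ∀ k : ℕ, ∀ i : Fin (2 * N), z (k + 1) i = (∑ j, A i j • z k j) + g k i)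
    (ς : ℝ) (hς : IsGreatest (Set.range fun i : Fin (2 * N) => ‖z 0 i‖) ς)
    (G : ℕ → ℝ)
    (hG : ∀ k, G k = ∑ j ∈ univ.filter (fun j : Fin (2 * N) => (j : ℕ) < N), ‖g k j‖)
    (zbar : ℕ → EuclideanSpace ℝ (Fin n))
    (hzbar : ∀ k, zbar k = (N : ℝ)⁻¹ • ∑ i, z k i) :
    ∀ k : ℕ, 1 ≤ k → ∀ i : Fin (2 * N), (i : ℕ) < N →
      ‖z k i - zbar k‖ ≤ 2 * N * ς * Γ * γ ^ k
        + Γ * ∑ r ∈ Icc 1 (k - 1), γ ^ (k - r) * G (r - 1) + G (k - 1) :=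
  stmt_2_general N n A hcol Γ γ hA g z hg hz ς hς G hG zbar hzbar
end

section
/- Let N ≥ 1, n ≥ 1, and let A be a 2N×2N real column stochastic matrix (every column sums to 1). Let M be the 2N×2N matrix whose first N rows have all entries equal to 1/N and whose last N rows are zero, and suppose there exist Γ > 0 and γ ∈ (0,1) such that |(A^k)_{ij} − M_{ij}| ≤ Γγ^k for all k ≥ 1 and all i,j. Let g : ℕ → (Fin 2N → ℝⁿ) satisfy g_k^i = 0 for all N+1 ≤ i ≤ 2N and all k, and let z : ℕ → (Fin 2N → ℝⁿ) satisfy the recursion z_{k+1}^i = Σ_{j=1}^{2N} A_{ij} z_k^j + g_k^i. Set ς = max_{1 ≤ i ≤ 2N} ‖z_0^i‖ and G_k = Σ_{j=1}^{N} ‖g_k^j‖. Then for all k ≥ 1 and all N+1 ≤ i ≤ 2N: ‖z_k^i‖ ≤ 2NςΓγ^k + Γ Σ_{r=1}^{k−1} γ^{k−r} G_{r−1}. -/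
open Finset

/-!
Unrolling `z_{k+1} = A z_k + g_k` gives `z_k = A^k z_0 + Σ_{r<k} A^{k-1-r} g_r`. In a row `i ≥ N`
the target matrix `M` vanishes, so every entry of `A^p` with `p ≥ 1` in that row is at most `Γγ^p`.
The term `r = k - 1` is `g_{k-1}^i = 0`, and in the other terms `g_r` only has its first `N`
blocks nonzero, which is where `G_r` comes from.
-/

namespace Matrix

variable {ι R M : Type*} [Fintype ι] [Semiring R] [AddCommMonoid M] [Module R M]

theorem sum_smul_sum_smul (A B : Matrix ι ι R) (v : ι → M) (i : ι) :
    ∑ j, A i j • ∑ l, B j l • v l = ∑ l, (A * B) i l • v l := by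
  simp only [smul_sum, smul_smul, mul_apply, sum_smul]
  exact sum_comm

theorem variation_of_constants [DecidableEq ι] (A : Matrix ι ι R) {z g : ℕ → ι → M}
    (hz : ∀ k i, z (k + 1) i = (∑ j, A i j • z k j) + g k i) (k : ℕ) (i : ι) :
    z k i = (∑ j, (A ^ k) i j • z 0 j) + ∑ r ∈ range k, ∑ j, (A ^ (k - 1 - r)) i j • g r j := by
  induction k generalizing i with
  | zero => simp [one_apply]
  | succ k ih =>
    have hlast : ∑ j, (A ^ (k + 1 - 1 - k)) i j • g k j = g k i := by simp [one_apply]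
    have hpow : ∀ r ∈ range k, A * A ^ (k - 1 - r) = A ^ (k + 1 - 1 - r) := fun r hr => by
      rw [← pow_succ']
      congr 1
      have := mem_range.mp hr
      omega
    have hswap : ∑ j, A i j • ∑ r ∈ range k, ∑ l, (A ^ (k - 1 - r)) j l • g r l =
        ∑ r ∈ range k, ∑ j, A i j • ∑ l, (A ^ (k - 1 - r)) j l • g r l := by
      simp only [smul_sum]
      exact sum_comm
    rw [hz]
    simp only [ih, smul_add, sum_add_distrib]
    rw [sum_smul_sum_smul, ← pow_succ', hswap, sum_range_succ _ k, hlast, add_assoc]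
    congr 2
    refine sum_congr rfl fun r hr => ?_
    rw [sum_smul_sum_smul, hpow r hr]

end Matrix

theorem norm_sum_smul_le_of_norm_le {ι 𝕜 E : Type*} [Fintype ι] [NormedField 𝕜]
    [SeminormedAddCommGroup E] [NormedSpace 𝕜 E] {c : ι → 𝕜} {v : ι → E} {s : Finset ι} {B : ℝ}
    (hc : ∀ j ∈ s, ‖c j‖ ≤ B) (hv : ∀ j ∉ s, v j = 0) :
    ‖∑ j, c j • v j‖ ≤ B * ∑ j ∈ s, ‖v j‖ := by
  rw [← sum_subset (subset_univ s) fun j _ hj => by rw [hv j hj, smul_zero], mul_sum]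
  refine (norm_sum_le _ _).trans (sum_le_sum fun j hj => ?_)
  rw [norm_smul]
  exact mul_le_mul_of_nonneg_right (hc j hj) (norm_nonneg _)

theorem stmt_3_general (N n : ℕ)
    (A : Matrix (Fin (2 * N)) (Fin (2 * N)) ℝ)
    (Γ γ : ℝ)
    (hA : ∀ k : ℕ, 1 ≤ k → ∀ i j : Fin (2 * N),
      |(A ^ k) i j - (if (i : ℕ) < N then (N : ℝ)⁻¹ else 0)| ≤ Γ * γ ^ k)
    (g z : ℕ → Fin (2 * N) → EuclideanSpace ℝ (Fin n))
    (hg : ∀ k : ℕ, ∀ i : Fin (2 * N), N ≤ (i : ℕ) → g k i = 0)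
    (hz : ∀ k : ℕ, ∀ i : Fin (2 * N), z (k + 1) i = (∑ j, A i j • z k j) + g k i)
    (ς : ℝ) (hς : IsGreatest (Set.range fun i : Fin (2 * N) => ‖z 0 i‖) ς)
    (G : ℕ → ℝ)
    (hG : ∀ k, G k = ∑ j ∈ univ.filter (fun j : Fin (2 * N) => (j : ℕ) < N), ‖g k j‖) :
    ∀ k : ℕ, 1 ≤ k → ∀ i : Fin (2 * N), N ≤ (i : ℕ) →
      ‖z k i‖ ≤ 2 * N * ς * Γ * γ ^ k
        + Γ * ∑ r ∈ Icc 1 (k - 1), γ ^ (k - r) * G (r - 1) := by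
  intro k hk i hi
  obtain ⟨m, rfl⟩ : ∃ m, k = m + 1 := ⟨k - 1, by omega⟩
  have hrow : ∀ p, 1 ≤ p → ∀ j, ‖(A ^ p) i j‖ ≤ Γ * γ ^ p := fun p hp j => by
    simpa [if_neg (show ¬(i : ℕ) < N by omega)] using hA p hp i j
  have hinit : ‖∑ j, (A ^ (m + 1)) i j • z 0 j‖ ≤ 2 * N * ς * Γ * γ ^ (m + 1) := by
    have hsum : ∑ j, ‖z 0 j‖ ≤ 2 * N * ς := by
      simpa using sum_le_card_nsmul univ _ ς fun j _ => hς.2 ⟨j, rfl⟩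
    calc _ ≤ Γ * γ ^ (m + 1) * ∑ j, ‖z 0 j‖ :=
          norm_sum_smul_le_of_norm_le (fun j _ => hrow _ le_add_self j) (by simp)
      _ ≤ Γ * γ ^ (m + 1) * (2 * N * ς) :=
          mul_le_mul_of_nonneg_left hsum ((norm_nonneg _).trans (hrow _ le_add_self i))
      _ = _ := by ring
  have hforcing : ∀ r ∈ range m,
      ‖∑ j, (A ^ (m + 1 - 1 - r)) i j • g r j‖ ≤ Γ * (γ ^ (m - r) * G r) := fun r hr => by
    have hr : 1 ≤ m - r := by have := mem_range.mp hr; omega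
    rw [hG, ← mul_assoc, Nat.add_sub_cancel]
    exact norm_sum_smul_le_of_norm_le (fun j _ => hrow _ hr j)
      fun j hj => hg r j (by simpa using hj)
  have hlast : ∑ j, (A ^ (m + 1 - 1 - m)) i j • g m j = 0 := by simp [Matrix.one_apply, hg m i hi]
  have hreindex :
      ∑ r ∈ range m, γ ^ (m - r) * G r = ∑ r ∈ Icc 1 m, γ ^ (m + 1 - r) * G (r - 1) := by
    rw [← Finset.Ico_add_one_right_eq_Icc, sum_Ico_eq_sum_range]
    refine sum_congr (by simp) fun r _ => ?_
    congr 2 <;> omega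
  rw [Matrix.variation_of_constants A hz, sum_range_succ, hlast, add_zero, Nat.add_sub_cancel,
    ← hreindex, mul_sum]
  exact (norm_add_le _ _).trans (add_le_add hinit ((norm_sum_le _ _).trans (sum_le_sum hforcing)))

/-- Lemma 3-(2): surplus bound `‖y_k^i‖ ≤ 2NςΓγ^k + Γ Σ_{r=1}^{k−1} γ^{k−r} G_{r−1}`
for the last `N` coordinates of the augmented dynamics `z_{k+1} = A z_k + g_k`. -/
theorem stmt_3 (N n : ℕ) (hN : 1 ≤ N) (hn : 1 ≤ n)
    (A : Matrix (Fin (2 * N)) (Fin (2 * N)) ℝ)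
    (hcol : ∀ j, ∑ i, A i j = 1)
    (Γ γ : ℝ) (hΓ : 0 < Γ) (hγ : γ ∈ Set.Ioo (0 : ℝ) 1)
    (hA : ∀ k : ℕ, 1 ≤ k → ∀ i j : Fin (2 * N),
      |(A ^ k) i j - (if (i : ℕ) < N then (N : ℝ)⁻¹ else 0)| ≤ Γ * γ ^ k)
    (g z : ℕ → Fin (2 * N) → EuclideanSpace ℝ (Fin n))
    (hg : ∀ k : ℕ, ∀ i : Fin (2 * N), N ≤ (i : ℕ) → g k i = 0)
    (hz : ∀ k : ℕ, ∀ i : Fin (2 * N), z (k + 1) i = (∑ j, A i j • z k j) + g k i)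
    (ς : ℝ) (hς : IsGreatest (Set.range fun i : Fin (2 * N) => ‖z 0 i‖) ς)
    (G : ℕ → ℝ)
    (hG : ∀ k, G k = ∑ j ∈ univ.filter (fun j : Fin (2 * N) => (j : ℕ) < N), ‖g k j‖) :
    ∀ k : ℕ, 1 ≤ k → ∀ i : Fin (2 * N), N ≤ (i : ℕ) →
      ‖z k i‖ ≤ 2 * N * ς * Γ * γ ^ k
        + Γ * ∑ r ∈ Icc 1 (k - 1), γ ^ (k - r) * G (r - 1) :=
  stmt_3_general N n A Γ γ hA g z hg hz ς hς G hG
end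

section
/- Let (Ω, ℱ, ℙ) be a probability space and let (G_k)_{k≥0} and (H_k)_{k≥0} be nonnegative real-valued random variables with each H_k square-integrable and each G_k integrable. Let N ≥ 1, ς ≥ 0, Γ > 0, γ ∈ (0,1), K₁ > 0 be constants, let ε satisfy 0 < ε < (1−γ)/(2√3·NΓγ), and let (α_k)_{k≥0} be a positive non-increasing real sequence. Assume: (i) almost surely, for all k ≥ 1, G_k ≤ 4N²ςεΓγ^k + α_k H_k + 2NεΓ Σ_{r=1}^{k−1} γ^{k−r} G_{r−1}; and (ii) E[H_k²] ≤ N²K₁² for all k. Then there exist constants Φ₁ > 0 and Ψ₁ > 0 (independent of K) such that for every K ≥ 1: Σ_{k=1}^{K} α_k E[G_k] ≤ Φ₁ Σ_{k=1}^{K} α_k² + Ψ₁. -/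
/-!
Taking expectations in the almost sure recursion and using `E[H_k] ≤ √E[H_k²] ≤ N K₁` gives a
deterministic recursion for `g_k = E[G_k]`. Multiply it by `α_k` and sum over `k ≤ K`. After
exchanging the order of summation, the convolution term becomes a geometric tail. Since `α` is
non-increasing, that term is at most `c (α₀ g₀ + Σ α_k g_k)` with `c = 2NεΓ γ/(1-γ)`. The bound on
`ε` makes `c < 1`, so this term can be absorbed into the left-hand side.
-/

open MeasureTheory Finset

lemma integral_le_of_integral_sq_le {Ω : Type*} [MeasurableSpace Ω] {μ : Measure Ω}
    [IsProbabilityMeasure μ] {X : Ω → ℝ} (hX : MemLp X 2 μ) {M : ℝ} (hM : 0 ≤ M)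
    (hX2 : ∫ ω, X ω ^ 2 ∂μ ≤ M ^ 2) : ∫ ω, X ω ∂μ ≤ M := by
  have hvar := ProbabilityTheory.variance_nonneg X μ
  rw [ProbabilityTheory.variance_eq_sub hX] at hvar
  exact (abs_le_of_sq_le_sq' (by simp only [Pi.pow_apply] at hvar; linarith) hM).2

lemma integral_le_of_ae_le_add_sum {Ω : Type*} [MeasurableSpace Ω] {μ : Measure Ω}
    [IsProbabilityMeasure μ] {X Y : Ω → ℝ} {Z : ℕ → Ω → ℝ} {s : Finset ℕ} {a b c : ℝ}
    {w : ℕ → ℝ} (hX : Integrable X μ) (hY : Integrable Y μ)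
    (hZ : ∀ i ∈ s, Integrable (Z i) μ)
    (h : ∀ᵐ ω ∂μ, X ω ≤ a + b * Y ω + c * ∑ i ∈ s, w i * Z i ω) :
    ∫ ω, X ω ∂μ ≤ a + b * ∫ ω, Y ω ∂μ + c * ∑ i ∈ s, w i * ∫ ω, Z i ω ∂μ := by
  have hwZ : ∀ i ∈ s, Integrable (fun ω => w i * Z i ω) μ := fun i hi => (hZ i hi).const_mul _
  have hbY : Integrable (fun ω => b * Y ω) μ := hY.const_mul b
  have haY : Integrable (fun ω => a + b * Y ω) μ := (integrable_const a).add hbY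
  have hsum : Integrable (fun ω => c * ∑ i ∈ s, w i * Z i ω) μ :=
    (integrable_finsetSum s hwZ).const_mul c
  calc ∫ ω, X ω ∂μ ≤ ∫ ω, a + b * Y ω + c * ∑ i ∈ s, w i * Z i ω ∂μ :=
        integral_mono_ae hX (haY.add hsum) h
    _ = _ := by
        rw [integral_add haY hsum, integral_add (integrable_const a) hbY,
          integral_const_mul, integral_const_mul, integral_finsetSum s hwZ]
        simp only [integral_const, probReal_univ, one_smul, integral_const_mul]

lemma sum_Icc_pow_sub_le {γ : ℝ} (hγ0 : 0 ≤ γ) (hγ1 : γ < 1) (r n : ℕ) :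
    ∑ k ∈ Icc (r + 1) n, γ ^ (k - r) ≤ γ / (1 - γ) :=
  calc ∑ k ∈ Icc (r + 1) n, γ ^ (k - r) ≤ ∑ k ∈ Ico (1 + r) (n + 1 + r), γ ^ (k - r) :=
        sum_le_sum_of_subset_of_nonneg (fun k => by simp only [mem_Icc, mem_Ico]; omega)
          fun _ _ _ => pow_nonneg hγ0 _
    _ = ∑ k ∈ Ico 1 (n + 1), γ ^ k := sum_Ico_add_right_sub_eq ..
    _ ≤ γ / (1 - γ) := by simpa using geom_sum_Ico_le_of_lt_one (m := 1) (n := n + 1) hγ0 hγ1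

lemma sum_range_le_add_sum_Icc {y : ℕ → ℝ} (hy : ∀ j, 0 ≤ y j) (K : ℕ) :
    ∑ j ∈ range K, y j ≤ y 0 + ∑ j ∈ Icc 1 K, y j := by
  rw [← zero_add 1, ← Ico_add_one_right_eq_Icc,
    ← sum_eq_sum_Ico_succ_bot (b := K + 1) (by omega), ← range_eq_Ico]
  exact sum_le_sum_of_subset_of_nonneg (range_subset_range.2 K.le_succ) fun _ _ _ => hy _

lemma sum_Icc_sum_Icc_pow_sub_mul_le {γ : ℝ} (hγ0 : 0 ≤ γ) (hγ1 : γ < 1) {y : ℕ → ℝ}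
    (hy : ∀ j, 0 ≤ y j) (K : ℕ) :
    ∑ k ∈ Icc 1 K, ∑ r ∈ Icc 1 (k - 1), γ ^ (k - r) * y (r - 1)
      ≤ γ / (1 - γ) * ∑ j ∈ range K, y j := by
  rw [sum_comm' (t' := Icc 1 (K - 1)) (s' := fun r => Icc (r + 1) K)
    (fun k r => by simp only [mem_Icc]; omega)]
  calc ∑ r ∈ Icc 1 (K - 1), ∑ k ∈ Icc (r + 1) K, γ ^ (k - r) * y (r - 1)
      ≤ ∑ r ∈ Icc 1 (K - 1), γ / (1 - γ) * y (r - 1) := by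
        refine sum_le_sum fun r _ => ?_
        rw [← sum_mul]
        exact mul_le_mul_of_nonneg_right (sum_Icc_pow_sub_le hγ0 hγ1 r K) (hy _)
    _ ≤ γ / (1 - γ) * ∑ r ∈ Ico (0 + 1) (K + 1), y (r - 1) := by
        rw [← mul_sum]
        refine mul_le_mul_of_nonneg_left (sum_le_sum_of_subset_of_nonneg
          (fun k => by simp only [mem_Icc, mem_Ico]; omega) fun _ _ _ => hy _) ?_
        exact div_nonneg hγ0 (by linarith)
    _ = γ / (1 - γ) * ∑ j ∈ range K, y j := by
        rw [sum_Ico_add_right_sub_eq, range_eq_Ico]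

lemma Antitone.sum_Icc_mul_sum_Icc_pow_sub_mul_le {α x : ℕ → ℝ} {γ : ℝ} (hα : Antitone α)
    (hα0 : ∀ k, 0 ≤ α k) (hx : ∀ k, 0 ≤ x k) (hγ0 : 0 ≤ γ) (hγ1 : γ < 1) (K : ℕ) :
    ∑ k ∈ Icc 1 K, α k * ∑ r ∈ Icc 1 (k - 1), γ ^ (k - r) * x (r - 1)
      ≤ γ / (1 - γ) * (α 0 * x 0 + ∑ k ∈ Icc 1 K, α k * x k) :=
  calc ∑ k ∈ Icc 1 K, α k * ∑ r ∈ Icc 1 (k - 1), γ ^ (k - r) * x (r - 1)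
      ≤ ∑ k ∈ Icc 1 K, ∑ r ∈ Icc 1 (k - 1), γ ^ (k - r) * (α (r - 1) * x (r - 1)) := by
        refine sum_le_sum fun k _ => ?_
        rw [mul_sum]
        refine sum_le_sum fun r hr => ?_
        have hαr : α k ≤ α (r - 1) := hα (by simp only [mem_Icc] at hr; omega)
        have := mul_le_mul_of_nonneg_right hαr
          (mul_nonneg (pow_nonneg hγ0 (k - r)) (hx (r - 1)))
        linarith
    _ ≤ γ / (1 - γ) * ∑ j ∈ range K, α j * x j :=
        sum_Icc_sum_Icc_pow_sub_mul_le hγ0 hγ1 (fun j => mul_nonneg (hα0 j) (hx j)) K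
    _ ≤ γ / (1 - γ) * (α 0 * x 0 + ∑ k ∈ Icc 1 K, α k * x k) :=
        mul_le_mul_of_nonneg_left
          (sum_range_le_add_sum_Icc (fun j => mul_nonneg (hα0 j) (hx j)) K)
          (div_nonneg hγ0 (by linarith))

lemma Antitone.one_sub_mul_sum_Icc_mul_le_of_recursion {g a α : ℕ → ℝ} {B γ : ℝ}
    (hα : Antitone α) (hα0 : ∀ k, 0 ≤ α k) (hg : ∀ k, 0 ≤ g k) (hγ0 : 0 ≤ γ) (hγ1 : γ < 1)
    (hB : 0 ≤ B)
    (hrec : ∀ k, 1 ≤ k → g k ≤ a k + B * ∑ r ∈ Icc 1 (k - 1), γ ^ (k - r) * g (r - 1))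
    (K : ℕ) :
    (1 - B * (γ / (1 - γ))) * ∑ k ∈ Icc 1 K, α k * g k
      ≤ ∑ k ∈ Icc 1 K, α k * a k + B * (γ / (1 - γ)) * (α 0 * g 0) := by
  have hsum : ∑ k ∈ Icc 1 K, α k * g k ≤ ∑ k ∈ Icc 1 K, α k * a k
      + B * ∑ k ∈ Icc 1 K, α k * ∑ r ∈ Icc 1 (k - 1), γ ^ (k - r) * g (r - 1) := by
    rw [mul_sum, ← sum_add_distrib]
    refine sum_le_sum fun k hk => ?_
    have := mul_le_mul_of_nonneg_left (hrec k (mem_Icc.1 hk).1) (hα0 k)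
    linarith
  have hconv := mul_le_mul_of_nonneg_left
    (hα.sum_Icc_mul_sum_Icc_pow_sub_mul_le hα0 hg hγ0 hγ1 K) hB
  linarith

lemma Antitone.sum_Icc_mul_pow_le {α : ℕ → ℝ} {γ : ℝ} (hα : Antitone α) (hα0 : 0 ≤ α 0)
    (hγ0 : 0 ≤ γ) (hγ1 : γ < 1) (K : ℕ) :
    ∑ k ∈ Icc 1 K, α k * γ ^ k ≤ α 0 * (γ / (1 - γ)) :=
  calc ∑ k ∈ Icc 1 K, α k * γ ^ k ≤ ∑ k ∈ Icc 1 K, α 0 * γ ^ k :=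
        sum_le_sum fun k _ => mul_le_mul_of_nonneg_right (hα k.zero_le) (pow_nonneg hγ0 k)
    _ ≤ α 0 * (γ / (1 - γ)) := by
        rw [← mul_sum, ← Ico_add_one_right_eq_Icc]
        refine mul_le_mul_of_nonneg_left ?_ hα0
        simpa using geom_sum_Ico_le_of_lt_one (m := 1) (n := K + 1) hγ0 hγ1

lemma Antitone.sum_Icc_mul_pow_add_mul_le {α : ℕ → ℝ} {A M γ : ℝ} (hα : Antitone α)
    (hα0 : 0 ≤ α 0) (hA : 0 ≤ A) (hγ0 : 0 ≤ γ) (hγ1 : γ < 1) (K : ℕ) :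
    ∑ k ∈ Icc 1 K, α k * (A * γ ^ k + α k * M)
      ≤ A * (α 0 * (γ / (1 - γ))) + M * ∑ k ∈ Icc 1 K, α k ^ 2 := by
  have hsplit : ∑ k ∈ Icc 1 K, α k * (A * γ ^ k + α k * M)
      = A * ∑ k ∈ Icc 1 K, α k * γ ^ k + M * ∑ k ∈ Icc 1 K, α k ^ 2 := by
    rw [mul_sum, mul_sum, ← sum_add_distrib]
    exact sum_congr rfl fun _ _ => by ring
  rw [hsplit]
  gcongr
  exact hα.sum_Icc_mul_pow_le hα0 hγ0 hγ1 K

lemma mul_div_one_sub_lt_one_of_lt_div_sqrt_three {N Γ γ ε : ℝ} (hN : 0 < N) (hΓ : 0 < Γ)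
    (hγ0 : 0 < γ) (hγ1 : γ < 1) (hε : 0 ≤ ε)
    (hε' : ε < (1 - γ) / (2 * Real.sqrt 3 * N * Γ * γ)) :
    2 * N * ε * Γ * (γ / (1 - γ)) < 1 := by
  have hsqrt3 : 2 * N * ε * Γ * γ ≤ ε * (2 * Real.sqrt 3 * N * Γ * γ) := by
    have := mul_le_mul_of_nonneg_left (Real.one_le_sqrt.2 (by norm_num : (1 : ℝ) ≤ 3))
      (by positivity : 0 ≤ 2 * N * ε * Γ * γ)
    linarith
  rw [lt_div_iff₀ (by positivity)] at hε'
  rw [← mul_div_assoc, div_lt_one (by linarith)]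
  linarith

theorem stmt_4_general {Ω : Type*} [MeasurableSpace Ω] (ℙ : Measure Ω) [IsProbabilityMeasure ℙ]
    (G H : ℕ → Ω → ℝ)
    (hGnn : ∀ k ω, 0 ≤ G k ω)
    (hHL2 : ∀ k, MemLp (H k) 2 ℙ) (hGint : ∀ k, Integrable (G k) ℙ)
    (N ς Γ γ K₁ ε : ℝ) (hN : 1 ≤ N) (hς : 0 ≤ ς) (hΓ : 0 < Γ)
    (hγ : γ ∈ Set.Ioo (0 : ℝ) 1) (hK₁ : 0 < K₁)
    (hε : 0 < ε) (hε' : ε < (1 - γ) / (2 * Real.sqrt 3 * N * Γ * γ))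
    (α : ℕ → ℝ) (hαpos : ∀ k, 0 < α k) (hαmono : ∀ k, α (k + 1) ≤ α k)
    (hrec : ∀ᵐ ω ∂ℙ, ∀ k : ℕ, 1 ≤ k →
      G k ω ≤ 4 * N ^ 2 * ς * ε * Γ * γ ^ k + α k * H k ω
        + 2 * N * ε * Γ * ∑ r ∈ Icc 1 (k - 1), γ ^ (k - r) * G (r - 1) ω)
    (hH2 : ∀ k, ∫ ω, (H k ω) ^ 2 ∂ℙ ≤ N ^ 2 * K₁ ^ 2) :
    ∃ Φ₁ > (0 : ℝ), ∃ Ψ₁ > (0 : ℝ), ∀ K : ℕ, 1 ≤ K →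
      ∑ k ∈ Icc 1 K, α k * ∫ ω, G k ω ∂ℙ ≤ Φ₁ * ∑ k ∈ Icc 1 K, (α k) ^ 2 + Ψ₁ := by
  obtain ⟨hγ0, hγ1⟩ := hγ
  have hN0 : 0 < N := one_pos.trans_le hN
  have hα : Antitone α := antitone_nat_of_succ_le hαmono
  have hα0 : ∀ k, 0 ≤ α k := fun k => (hαpos k).le
  set A := 4 * N ^ 2 * ς * ε * Γ
  set c := 2 * N * ε * Γ * (γ / (1 - γ))
  set g := fun k => ∫ ω, G k ω ∂ℙ
  have hc : c < 1 := mul_div_one_sub_lt_one_of_lt_div_sqrt_three hN0 hΓ hγ0 hγ1 hε.le hε'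
  have hEG : ∀ k, 1 ≤ k → g k ≤ (A * γ ^ k + α k * (N * K₁))
      + 2 * N * ε * Γ * ∑ r ∈ Icc 1 (k - 1), γ ^ (k - r) * g (r - 1) := fun k hk => by
    have hEH := integral_le_of_integral_sq_le (hHL2 k) (by positivity)
      ((mul_pow N K₁ 2).symm ▸ hH2 k)
    have := integral_le_of_ae_le_add_sum (hGint k) ((hHL2 k).integrable one_le_two)
      (fun r _ => hGint (r - 1)) (hrec.mono fun ω hω => hω k hk)
    linarith [mul_le_mul_of_nonneg_left hEH (hα0 k)]
  have hsum := hα.one_sub_mul_sum_Icc_mul_le_of_recursion hα0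
    (fun k => integral_nonneg (hGnn k)) hγ0.le hγ1 (by positivity) hEG
  set R := A * (α 0 * (γ / (1 - γ))) + c * (α 0 * g 0)
  have hR : 0 ≤ R := by
    have := hα0 0; have : 0 ≤ g 0 := integral_nonneg (hGnn 0); have : 0 ≤ c := by positivity
    positivity
  refine ⟨N * K₁ / (1 - c), div_pos (by positivity) (sub_pos.2 hc),
    R / (1 - c) + 1, by positivity, fun K _ => ?_⟩
  have hS : (1 - c) * ∑ k ∈ Icc 1 K, α k * g k ≤ N * K₁ * ∑ k ∈ Icc 1 K, α k ^ 2 + R := by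
    linarith [hsum K, hα.sum_Icc_mul_pow_add_mul_le (M := N * K₁) (hα0 0)
      (by positivity : 0 ≤ A) hγ0.le hγ1 K]
  rw [← le_div_iff₀' (sub_pos.2 hc), add_div, mul_div_right_comm] at hS
  linarith

/-- Lemma 4-(1): `Σ_{k=1}^K α_k E[G_k] ≤ Φ₁ Σ_{k=1}^K α_k² + Ψ₁`. -/
theorem stmt_4 {Ω : Type*} [MeasurableSpace Ω] (ℙ : Measure Ω) [IsProbabilityMeasure ℙ]
    (G H : ℕ → Ω → ℝ)
    (hGnn : ∀ k ω, 0 ≤ G k ω) (hHnn : ∀ k ω, 0 ≤ H k ω)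
    (hHL2 : ∀ k, MemLp (H k) 2 ℙ) (hGint : ∀ k, Integrable (G k) ℙ)
    (N ς Γ γ K₁ ε : ℝ) (hN : 1 ≤ N) (hς : 0 ≤ ς) (hΓ : 0 < Γ)
    (hγ : γ ∈ Set.Ioo (0 : ℝ) 1) (hK₁ : 0 < K₁)
    (hε : 0 < ε) (hε' : ε < (1 - γ) / (2 * Real.sqrt 3 * N * Γ * γ))
    (α : ℕ → ℝ) (hαpos : ∀ k, 0 < α k) (hαmono : ∀ k, α (k + 1) ≤ α k)
    (hrec : ∀ᵐ ω ∂ℙ, ∀ k : ℕ, 1 ≤ k →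
      G k ω ≤ 4 * N ^ 2 * ς * ε * Γ * γ ^ k + α k * H k ω
        + 2 * N * ε * Γ * ∑ r ∈ Icc 1 (k - 1), γ ^ (k - r) * G (r - 1) ω)
    (hH2 : ∀ k, ∫ ω, (H k ω) ^ 2 ∂ℙ ≤ N ^ 2 * K₁ ^ 2) :
    ∃ Φ₁ > (0 : ℝ), ∃ Ψ₁ > (0 : ℝ), ∀ K : ℕ, 1 ≤ K →
      ∑ k ∈ Icc 1 K, α k * ∫ ω, G k ω ∂ℙ ≤ Φ₁ * ∑ k ∈ Icc 1 K, (α k) ^ 2 + Ψ₁ :=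
  stmt_4_general ℙ G H hGnn hHL2 hGint N ς Γ γ K₁ ε hN hς hΓ hγ hK₁ hε hε' α hαpos hαmono hrec hH2
end

section
/- Let (Ω, ℱ, ℙ) be a probability space and let (G_k)_{k≥0} and (H_k)_{k≥0} be nonnegative real-valued random variables with each H_k and each G_k square-integrable. Let N ≥ 1, ς ≥ 0, Γ > 0, γ ∈ (0,1), K₁ > 0 be constants, let ε satisfy 0 < ε < (1−γ)/(2√3·NΓγ), and let (α_k)_{k≥0} be a positive non-increasing real sequence. Assume: (i) almost surely, for all k ≥ 1, G_k ≤ 4N²ςεΓγ^k + α_k H_k + 2NεΓ Σ_{r=1}^{k−1} γ^{k−r} G_{r−1}; and (ii) E[H_k²] ≤ N²K₁² for all k. Then there exist constants Φ₂ > 0 and Ψ₂ > 0 (independent of K) such that for every K ≥ 1: Σ_{k=1}^{K} E[G_k²] ≤ Φ₂ Σ_{k=1}^{K} α_k² + Ψ₂. -/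
/-!
Square the recursion using `(x + y + z)² ≤ 3(x² + y² + z²)` and the weighted Cauchy–Schwarz
inequality `(∑ wᵣ zᵣ)² ≤ (∑ wᵣ)(∑ wᵣ zᵣ²)`, where the weights `γ^(k-r)` sum to at most
`ρ = γ/(1-γ)`. Taking expectations, `g_k = E[G_k²]` satisfies the linear recursion
`g_k ≤ 3A²γ^(2k) + 3N²K₁²α_k² + 3B²ρ ∑ᵣ γ^(k-r) g_{r-1}` with `A = 4N²ςεΓ`, `B = 2NεΓ`.
Summing over `k ≤ K` and exchanging the order of summation bounds the convolution term by
`c (g₀ + ∑ g_k)` with `c = 3B²ρ²`; the condition on `ε` is exactly `c < 1`, so this term is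
absorbed into the left-hand side.
-/

open MeasureTheory Finset

lemma sum_pow_le_div_one_sub {q : ℝ} (hq₀ : 0 ≤ q) (hq₁ : q < 1) {s : Finset ℕ}
    (hs : ∀ j ∈ s, 1 ≤ j) : ∑ j ∈ s, q ^ j ≤ q / (1 - q) := by
  have h0 : 0 ∉ s := fun h => by simpa using hs 0 h
  have hle : ∑ j ∈ insert 0 s, q ^ j ≤ (1 - q)⁻¹ :=
    tsum_geometric_of_lt_one hq₀ hq₁ ▸
      (summable_geometric_of_lt_one hq₀ hq₁).sum_le_tsum _ fun j _ => pow_nonneg hq₀ j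
  rw [sum_insert h0, pow_zero] at hle
  have : (1 - q)⁻¹ - 1 = q / (1 - q) := by field_simp [(sub_pos.2 hq₁).ne']; ring
  linarith

lemma sum_pow_comp_le_div_one_sub {q : ℝ} (hq₀ : 0 ≤ q) (hq₁ : q < 1) {s : Finset ℕ}
    {f : ℕ → ℕ} (hf : Set.InjOn f s) (hf₁ : ∀ j ∈ s, 1 ≤ f j) :
    ∑ j ∈ s, q ^ f j ≤ q / (1 - q) := by
  rw [← sum_image hf]
  exact sum_pow_le_div_one_sub hq₀ hq₁ (by simpa using hf₁)

lemma sq_sum_le_sum_mul_sum_mul_sq {ι : Type*} {s : Finset ι} {w z : ι → ℝ}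
    (hw : ∀ r ∈ s, 0 ≤ w r) :
    (∑ r ∈ s, w r * z r) ^ 2 ≤ (∑ r ∈ s, w r) * ∑ r ∈ s, w r * z r ^ 2 :=
  sum_sq_le_sum_mul_sum_of_sq_le_mul s hw (fun r hr => mul_nonneg (hw r hr) (sq_nonneg _))
    fun r _ => le_of_eq (by ring)

lemma sq_le_of_le_add_add_mul_sum {ι : Type*} {x a b B : ℝ} {s : Finset ι} {w z : ι → ℝ}
    (hw : ∀ r ∈ s, 0 ≤ w r) (hx : 0 ≤ x) (hle : x ≤ a + b + B * ∑ r ∈ s, w r * z r) :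
    x ^ 2 ≤ 3 * a ^ 2 + 3 * b ^ 2 + 3 * B ^ 2 * (∑ r ∈ s, w r) * ∑ r ∈ s, w r * z r ^ 2 := by
  set S := ∑ r ∈ s, w r * z r
  have hCS := sq_sum_le_sum_mul_sum_mul_sq (z := z) hw
  calc x ^ 2 ≤ (a + b + B * S) ^ 2 := pow_le_pow_left₀ hx hle 2
    _ ≤ 3 * a ^ 2 + 3 * b ^ 2 + 3 * B ^ 2 * S ^ 2 := by
      nlinarith [sq_nonneg (a - b), sq_nonneg (a - B * S), sq_nonneg (b - B * S)]
    _ ≤ _ := by rw [mul_assoc _ (∑ r ∈ s, w r)]; gcongr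

lemma integral_sq_le_of_le_add_add_mul_sum {Ω : Type*} [MeasurableSpace Ω] {μ : Measure Ω}
    [IsProbabilityMeasure μ] {ι : Type*} {X Y : Ω → ℝ} {Z : ι → Ω → ℝ} {a B : ℝ} {s : Finset ι}
    {w : ι → ℝ} (hw : ∀ r ∈ s, 0 ≤ w r) (hX : 0 ≤ᵐ[μ] X) (hY : MemLp Y 2 μ)
    (hZ : ∀ r ∈ s, MemLp (Z r) 2 μ)
    (hle : ∀ᵐ ω ∂μ, X ω ≤ a + Y ω + B * ∑ r ∈ s, w r * Z r ω) :
    ∫ ω, X ω ^ 2 ∂μ ≤ 3 * a ^ 2 + 3 * ∫ ω, Y ω ^ 2 ∂μ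
      + 3 * B ^ 2 * (∑ r ∈ s, w r) * ∑ r ∈ s, w r * ∫ ω, Z r ω ^ 2 ∂μ := by
  have hZint : ∀ r ∈ s, Integrable (fun ω => w r * Z r ω ^ 2) μ :=
    fun r hr => (hZ r hr).integrable_sq.const_mul _
  have hYint : Integrable (fun ω => 3 * Y ω ^ 2) μ := hY.integrable_sq.const_mul _
  have hheadint : Integrable (fun ω => 3 * a ^ 2 + 3 * Y ω ^ 2) μ :=
    (integrable_const _).add hYint
  have hsumint : Integrable (fun ω => 3 * B ^ 2 * (∑ r ∈ s, w r) * ∑ r ∈ s, w r * Z r ω ^ 2) μ :=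
    (integrable_finsetSum s hZint).const_mul _
  calc ∫ ω, X ω ^ 2 ∂μ
      ≤ ∫ ω, 3 * a ^ 2 + 3 * Y ω ^ 2
          + 3 * B ^ 2 * (∑ r ∈ s, w r) * ∑ r ∈ s, w r * Z r ω ^ 2 ∂μ := by
        refine integral_mono_of_nonneg (ae_of_all _ fun ω => sq_nonneg _)
          (hheadint.add hsumint) ?_
        filter_upwards [hX, hle] with ω hXω hω
        exact sq_le_of_le_add_add_mul_sum hw hXω hω
    _ = _ := by
        rw [integral_add hheadint hsumint,
          integral_add (integrable_const _) hYint, integral_const, integral_const_mul,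
          integral_const_mul, integral_finsetSum s hZint]
        simp only [probReal_univ, one_smul, integral_const_mul]

lemma sum_Icc_sq_mul_pow_le {A q : ℝ} (hq₀ : 0 ≤ q) (hq₁ : q < 1) (K : ℕ) :
    ∑ k ∈ Icc 1 K, (A * q ^ k) ^ 2 ≤ A ^ 2 * (q ^ 2 / (1 - q ^ 2)) := by
  simp_rw [mul_pow, ← pow_mul', pow_mul, ← mul_sum]
  exact mul_le_mul_of_nonneg_left (sum_pow_le_div_one_sub (sq_nonneg q)
    (pow_lt_one₀ hq₀ hq₁ two_ne_zero) fun k hk => (mem_Icc.1 hk).1) (sq_nonneg A)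

lemma integral_sq_le_of_le_add_mul_sum_pow {Ω : Type*} [MeasurableSpace Ω] {μ : Measure Ω}
    [IsProbabilityMeasure μ] {G H : ℕ → Ω → ℝ} {α : ℕ → ℝ} {A B C γ : ℝ} (hγ₀ : 0 ≤ γ)
    (hγ₁ : γ < 1) (hG : ∀ k, 0 ≤ᵐ[μ] G k) (hGL2 : ∀ k, MemLp (G k) 2 μ)
    (hHL2 : ∀ k, MemLp (H k) 2 μ) (hH2 : ∀ k, ∫ ω, H k ω ^ 2 ∂μ ≤ C)
    (hrec : ∀ᵐ ω ∂μ, ∀ k : ℕ, 1 ≤ k →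
      G k ω ≤ A * γ ^ k + α k * H k ω + B * ∑ r ∈ Icc 1 (k - 1), γ ^ (k - r) * G (r - 1) ω)
    {k : ℕ} (hk : 1 ≤ k) :
    ∫ ω, G k ω ^ 2 ∂μ ≤ 3 * (A * γ ^ k) ^ 2 + 3 * C * α k ^ 2
      + 3 * B ^ 2 * (γ / (1 - γ)) * ∑ r ∈ Icc 1 (k - 1), γ ^ (k - r) * ∫ ω, G (r - 1) ω ^ 2 ∂μ := by
  have hmoment := integral_sq_le_of_le_add_add_mul_sum (Y := fun ω => α k * H k ω)
    (Z := fun r => G (r - 1)) (fun r _ => pow_nonneg hγ₀ _) (hG k)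
    ((hHL2 k).const_mul _) (fun r _ => hGL2 _) (hrec.mono fun ω h => h k hk)
  have hweights : ∑ r ∈ Icc 1 (k - 1), γ ^ (k - r) ≤ γ / (1 - γ) := by
    refine sum_pow_comp_le_div_one_sub hγ₀ hγ₁ (fun i hi j hj hij => ?_) fun r hr => ?_
    · simp only [coe_Icc, Set.mem_Icc] at hi hj hij
      omega
    · simp only [mem_Icc] at hr
      omega
  have hY : ∫ ω, (α k * H k ω) ^ 2 ∂μ ≤ α k ^ 2 * C := by
    simp_rw [mul_pow]
    rw [integral_const_mul]
    exact mul_le_mul_of_nonneg_left (hH2 k) (sq_nonneg _)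
  have hconv_nonneg : 0 ≤ ∑ r ∈ Icc 1 (k - 1), γ ^ (k - r) * ∫ ω, G (r - 1) ω ^ 2 ∂μ :=
    sum_nonneg fun r _ => mul_nonneg (pow_nonneg hγ₀ _) (integral_nonneg fun _ => sq_nonneg _)
  calc ∫ ω, G k ω ^ 2 ∂μ ≤ _ := hmoment
    _ ≤ 3 * (A * γ ^ k) ^ 2 + 3 * (α k ^ 2 * C) + 3 * B ^ 2 * (γ / (1 - γ))
          * ∑ r ∈ Icc 1 (k - 1), γ ^ (k - r) * ∫ ω, G (r - 1) ω ^ 2 ∂μ := by gcongr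
    _ = _ := by ring

lemma one_sub_mul_sum_le_of_le_add_mul_sum_pow {g a : ℕ → ℝ} {q D : ℝ} (hq₀ : 0 ≤ q)
    (hq₁ : q < 1) (hD : 0 ≤ D) (hg : ∀ k, 0 ≤ g k)
    (h : ∀ k, 1 ≤ k → g k ≤ a k + D * ∑ r ∈ Icc 1 (k - 1), q ^ (k - r) * g (r - 1)) (K : ℕ) :
    (1 - D * (q / (1 - q))) * ∑ k ∈ Icc 1 K, g k
      ≤ ∑ k ∈ Icc 1 K, a k + D * (q / (1 - q)) * g 0 := by
  have hswap : ∑ k ∈ Icc 1 K, ∑ r ∈ Icc 1 (k - 1), q ^ (k - r) * g (r - 1)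
      = ∑ r ∈ Icc 1 K, ∑ k ∈ Icc (r + 1) K, q ^ (k - r) * g (r - 1) :=
    sum_comm' fun k r => by simp only [mem_Icc]; omega
  have hinner : ∀ r ∈ Icc 1 K, ∑ k ∈ Icc (r + 1) K, q ^ (k - r) * g (r - 1)
      ≤ q / (1 - q) * g (r - 1) := fun r _ => by
    rw [← sum_mul]
    refine mul_le_mul_of_nonneg_right (sum_pow_comp_le_div_one_sub hq₀ hq₁ ?_ ?_) (hg _)
    · intro i hi j hj hij
      simp only [coe_Icc, Set.mem_Icc] at hi hj hij
      omega
    · intro k hk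
      simp only [mem_Icc] at hk
      omega
  have hshift : ∑ r ∈ Icc 1 K, g (r - 1) ≤ g 0 + ∑ k ∈ Icc 1 K, g k :=
    calc ∑ r ∈ Icc 1 K, g (r - 1) = ∑ j ∈ (Icc 1 K).image (· - 1), g j := by
          refine (sum_image fun i hi j hj hij => ?_).symm
          simp only [coe_Icc, Set.mem_Icc] at hi hj hij
          omega
      _ ≤ ∑ j ∈ insert 0 (Icc 1 K), g j :=
          sum_le_sum_of_subset_of_nonneg
            (fun j => by simp only [mem_image, mem_Icc, mem_insert]; omega) fun j _ _ => hg j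
      _ = g 0 + ∑ k ∈ Icc 1 K, g k := sum_insert (by simp)
  have hρ : 0 ≤ q / (1 - q) := div_nonneg hq₀ (sub_pos.2 hq₁).le
  suffices ∑ k ∈ Icc 1 K, g k
      ≤ ∑ k ∈ Icc 1 K, a k + D * (q / (1 - q)) * (g 0 + ∑ k ∈ Icc 1 K, g k) by linarith
  calc ∑ k ∈ Icc 1 K, g k
      ≤ ∑ k ∈ Icc 1 K, (a k + D * ∑ r ∈ Icc 1 (k - 1), q ^ (k - r) * g (r - 1)) :=
        sum_le_sum fun k hk => h k (mem_Icc.1 hk).1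
    _ = ∑ k ∈ Icc 1 K, a k + D * ∑ r ∈ Icc 1 K, ∑ k ∈ Icc (r + 1) K, q ^ (k - r) * g (r - 1) := by
        rw [sum_add_distrib, ← mul_sum, hswap]
    _ ≤ ∑ k ∈ Icc 1 K, a k + D * (q / (1 - q) * ∑ r ∈ Icc 1 K, g (r - 1)) := by
        rw [mul_sum (Icc 1 K) (fun r => g (r - 1))]
        gcongr _ + D * ?_
        exact sum_le_sum hinner
    _ ≤ _ := by rw [← mul_assoc]; gcongr

lemma three_mul_sq_mul_div_one_sub_sq_lt_one {N Γ γ ε : ℝ} (hN : 0 < N) (hΓ : 0 < Γ)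
    (hγ₀ : 0 < γ) (hγ₁ : γ < 1) (hε : 0 < ε)
    (hε' : ε < (1 - γ) / (2 * Real.sqrt 3 * N * Γ * γ)) :
    3 * (2 * N * ε * Γ) ^ 2 * (γ / (1 - γ)) * (γ / (1 - γ)) < 1 := by
  rw [lt_div_iff₀ (by positivity)] at hε'
  have hrewrite : Real.sqrt 3 * (2 * N * ε * Γ * (γ / (1 - γ)))
      = ε * (2 * Real.sqrt 3 * N * Γ * γ) / (1 - γ) := by ring
  have hsqrt : Real.sqrt 3 * (2 * N * ε * Γ * (γ / (1 - γ))) < 1 := by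
    rwa [hrewrite, div_lt_one (sub_pos.2 hγ₁)]
  calc 3 * (2 * N * ε * Γ) ^ 2 * (γ / (1 - γ)) * (γ / (1 - γ))
      = (Real.sqrt 3 * (2 * N * ε * Γ * (γ / (1 - γ)))) ^ 2 := by
        rw [mul_pow (Real.sqrt 3), Real.sq_sqrt zero_le_three]; ring
    _ < 1 := pow_lt_one₀ (by positivity) hsqrt two_ne_zero

theorem stmt_5_general {Ω : Type*} [MeasurableSpace Ω] (ℙ : Measure Ω) [IsProbabilityMeasure ℙ]
    (G H : ℕ → Ω → ℝ)
    (hGnn : ∀ k ω, 0 ≤ G k ω)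
    (hHL2 : ∀ k, MemLp (H k) 2 ℙ) (hGL2 : ∀ k, MemLp (G k) 2 ℙ)
    (N ς Γ γ K₁ ε : ℝ) (hN : 1 ≤ N) (hΓ : 0 < Γ)
    (hγ : γ ∈ Set.Ioo (0 : ℝ) 1) (hK₁ : 0 < K₁)
    (hε : 0 < ε) (hε' : ε < (1 - γ) / (2 * Real.sqrt 3 * N * Γ * γ))
    (α : ℕ → ℝ)
    (hrec : ∀ᵐ ω ∂ℙ, ∀ k : ℕ, 1 ≤ k →
      G k ω ≤ 4 * N ^ 2 * ς * ε * Γ * γ ^ k + α k * H k ω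
        + 2 * N * ε * Γ * ∑ r ∈ Icc 1 (k - 1), γ ^ (k - r) * G (r - 1) ω)
    (hH2 : ∀ k, ∫ ω, (H k ω) ^ 2 ∂ℙ ≤ N ^ 2 * K₁ ^ 2) :
    ∃ Φ₂ > (0 : ℝ), ∃ Ψ₂ > (0 : ℝ), ∀ K : ℕ, 1 ≤ K →
      ∑ k ∈ Icc 1 K, ∫ ω, (G k ω) ^ 2 ∂ℙ ≤ Φ₂ * ∑ k ∈ Icc 1 K, (α k) ^ 2 + Ψ₂ := by
  obtain ⟨hγ₀, hγ₁⟩ := hγ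
  have hN₀ : 0 < N := by linarith
  have h1γ : 0 < 1 - γ := sub_pos.2 hγ₁
  have h1γ2 : 0 < 1 - γ ^ 2 := sub_pos.2 (pow_lt_one₀ hγ₀.le hγ₁ two_ne_zero)
  set A := 4 * N ^ 2 * ς * ε * Γ
  set c := 3 * (2 * N * ε * Γ) ^ 2 * (γ / (1 - γ)) * (γ / (1 - γ)) with hc
  have hc₀ : 0 ≤ c := by positivity
  have h1c : 0 < 1 - c := sub_pos.2 (three_mul_sq_mul_div_one_sub_sq_lt_one hN₀ hΓ hγ₀ hγ₁ hε hε')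
  set g : ℕ → ℝ := fun k => ∫ ω, G k ω ^ 2 ∂ℙ
  have hg : ∀ k, 0 ≤ g k := fun k => integral_nonneg fun _ => sq_nonneg _
  have hg₀ := hg 0
  refine ⟨3 * N ^ 2 * K₁ ^ 2 / (1 - c), by positivity,
    (3 * (A ^ 2 * (γ ^ 2 / (1 - γ ^ 2))) + c * g 0) / (1 - c) + 1, by positivity, fun K _ => ?_⟩
  have hS := one_sub_mul_sum_le_of_le_add_mul_sum_pow hγ₀.le hγ₁ (by positivity) hg
    (fun k hk => integral_sq_le_of_le_add_mul_sum_pow hγ₀.le hγ₁ (fun k => ae_of_all _ (hGnn k))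
      hGL2 hHL2 hH2 hrec hk) K
  rw [sum_add_distrib, ← mul_sum, ← mul_sum (Icc 1 K) (fun k => α k ^ 2), ← hc] at hS
  have hgeom := sum_Icc_sq_mul_pow_le (A := A) hγ₀.le hγ₁ K
  calc ∑ k ∈ Icc 1 K, g k
      ≤ (3 * N ^ 2 * K₁ ^ 2 * ∑ k ∈ Icc 1 K, α k ^ 2
          + (3 * (A ^ 2 * (γ ^ 2 / (1 - γ ^ 2))) + c * g 0)) / (1 - c) := by
        rw [le_div_iff₀ h1c]
        linarith
    _ ≤ _ := by rw [add_div, mul_div_right_comm]; linarith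

/-- Lemma 4-(2): `Σ_{k=1}^K E[G_k²] ≤ Φ₂ Σ_{k=1}^K α_k² + Ψ₂`. -/
theorem stmt_5 {Ω : Type*} [MeasurableSpace Ω] (ℙ : Measure Ω) [IsProbabilityMeasure ℙ]
    (G H : ℕ → Ω → ℝ)
    (hGnn : ∀ k ω, 0 ≤ G k ω) (hHnn : ∀ k ω, 0 ≤ H k ω)
    (hHL2 : ∀ k, MemLp (H k) 2 ℙ) (hGL2 : ∀ k, MemLp (G k) 2 ℙ)
    (N ς Γ γ K₁ ε : ℝ) (hN : 1 ≤ N) (hς : 0 ≤ ς) (hΓ : 0 < Γ)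
    (hγ : γ ∈ Set.Ioo (0 : ℝ) 1) (hK₁ : 0 < K₁)
    (hε : 0 < ε) (hε' : ε < (1 - γ) / (2 * Real.sqrt 3 * N * Γ * γ))
    (α : ℕ → ℝ) (hαpos : ∀ k, 0 < α k) (hαmono : ∀ k, α (k + 1) ≤ α k)
    (hrec : ∀ᵐ ω ∂ℙ, ∀ k : ℕ, 1 ≤ k →
      G k ω ≤ 4 * N ^ 2 * ς * ε * Γ * γ ^ k + α k * H k ω
        + 2 * N * ε * Γ * ∑ r ∈ Icc 1 (k - 1), γ ^ (k - r) * G (r - 1) ω)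
    (hH2 : ∀ k, ∫ ω, (H k ω) ^ 2 ∂ℙ ≤ N ^ 2 * K₁ ^ 2) :
    ∃ Φ₂ > (0 : ℝ), ∃ Ψ₂ > (0 : ℝ), ∀ K : ℕ, 1 ≤ K →
      ∑ k ∈ Icc 1 K, ∫ ω, (G k ω) ^ 2 ∂ℙ ≤ Φ₂ * ∑ k ∈ Icc 1 K, (α k) ^ 2 + Ψ₂ :=
  stmt_5_general ℙ G H hGnn hHL2 hGL2 N ς Γ γ K₁ ε hN hΓ hγ hK₁ hε hε' α hrec hH2
end

section
/- Let (α_k)_{k≥0} be a positive non-increasing real sequence, let (e_k)_{k≥0} and (a_k)_{k≥0} be nonnegative real sequences, and let N ≥ 1, ς ≥ 0, Γ > 0, γ ∈ (0,1), Φ₁ ≥ 0, Ψ₁ ≥ 0 be constants. Assume: (i) for all k ≥ 1, e_k ≤ 2NςΓγ^k + Γ Σ_{r=1}^{k−1} γ^{k−r} a_{r−1} + a_{k−1}; and (ii) for all K ≥ 0, Σ_{k=0}^{K} α_k a_k ≤ Φ₁ Σ_{k=0}^{K} α_k² + Ψ₁. Then for all k ≥ 1: (Σ_{ℓ=0}^{k}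 α_ℓ e_ℓ)/(Σ_{ℓ=0}^{k} α_ℓ) ≤ [(Σ_{ℓ=0}^{k} α_ℓ²)/(Σ_{ℓ=0}^{k} α_ℓ)]·[NςΓ + Φ₁(1 + Γγ/(1−γ))] + [1/(Σ_{ℓ=0}^{k} α_ℓ)]·[α₀e₀ + NςΓγ²/(1−γ²) + Ψ₁(1 + Γγ/(1−γ))]. -/
open Finset

/-!
Multiply the bound (i) on `e (n + 1)` by `α (n + 1)`. Since `α` is non-increasing, every `a j`
in it can be traded for the weighted term `α j * a j`, and `2 α γ ^ (n + 1) ≤ α ^ 2 + γ ^ (2 (n + 1))`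
splits the first term. Summing over `n`, the convolution term is controlled by swapping the two
sums: each `α j * a j` then carries a geometric tail `∑ γ ^ (i + 1) ≤ γ / (1 - γ)`. Assumption (ii)
bounds what remains of the `α j * a j`, and dividing by `∑ α ℓ` gives the claim.
-/

lemma sum_Icc_one_eq_sum_range {M : Type*} [AddCommMonoid M] (f : ℕ → M) (n : ℕ) :
    ∑ r ∈ Icc 1 n, f r = ∑ j ∈ range n, f (j + 1) := by
  rw [range_eq_Ico, sum_Ico_add' f, zero_add, Ico_add_one_right_eq_Icc]

section GeometricSums

variable {K : Type*} [Field K] [LinearOrder K] [IsStrictOrderedRing K]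

lemma sum_range_pow_succ_le {x : K} (hx : 0 ≤ x) (hx1 : x < 1) (n : ℕ) :
    ∑ i ∈ range n, x ^ (i + 1) ≤ x / (1 - x) := by
  simp_rw [pow_succ', ← mul_sum]
  have h := geom_sum_Ico_le_of_lt_one (m := 0) (n := n) hx hx1
  rw [← range_eq_Ico, pow_zero] at h
  calc x * ∑ i ∈ range n, x ^ i ≤ x * (1 / (1 - x)) := by gcongr
    _ = x / (1 - x) := by ring

lemma sum_range_sum_range_pow_sub_mul_le {γ : K} (hγ : 0 ≤ γ) (hγ1 : γ < 1) {b : ℕ → K}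
    (hb : ∀ j, 0 ≤ b j) (k : ℕ) :
    ∑ n ∈ range k, ∑ j ∈ range n, γ ^ (n - j) * b j ≤ γ / (1 - γ) * ∑ j ∈ range k, b j := by
  rw [sum_comm' (t' := range k) (s' := fun j => Ico (j + 1) k)
    (fun n j => by simp only [mem_range, mem_Ico]; omega), mul_sum]
  refine sum_le_sum fun j _ => ?_
  rw [← sum_mul]
  refine mul_le_mul_of_nonneg_right ?_ (hb j)
  rw [sum_Ico_eq_sum_range]
  simp_rw [show ∀ i, j + 1 + i - j = i + 1 by omega]
  exact sum_range_pow_succ_le hγ hγ1 _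

end GeometricSums

lemma weighted_error_succ_le {α e a : ℕ → ℝ} {c Γ γ : ℝ} (hα : Antitone α) (hα0 : ∀ k, 0 ≤ α k)
    (ha : ∀ k, 0 ≤ a k) (hc : 0 ≤ c) (hΓ : 0 ≤ Γ) (hγ : 0 ≤ γ) {n : ℕ}
    (he : e (n + 1) ≤ 2 * c * γ ^ (n + 1) + Γ * ∑ j ∈ range n, γ ^ (n - j) * a j + a n) :
    α (n + 1) * e (n + 1) ≤ c * (α (n + 1) ^ 2 + (γ ^ 2) ^ (n + 1))
      + Γ * ∑ j ∈ range n, γ ^ (n - j) * (α j * a j) + α n * a n := by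
  calc α (n + 1) * e (n + 1)
      ≤ α (n + 1) * (2 * c * γ ^ (n + 1) + Γ * ∑ j ∈ range n, γ ^ (n - j) * a j + a n) :=
        mul_le_mul_of_nonneg_left he (hα0 _)
    _ = c * (2 * α (n + 1) * γ ^ (n + 1))
          + Γ * ∑ j ∈ range n, γ ^ (n - j) * (α (n + 1) * a j) + α (n + 1) * a n := by
        simp only [mul_add, mul_sum]
        ring_nf
    _ ≤ _ := by
        gcongr with j hj
        · rw [← pow_mul, mul_comm 2 (n + 1), pow_mul]
          exact two_mul_le_add_sq _ _
        · exact ha j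
        · exact hα ((mem_range.1 hj).le.trans n.le_succ)
        · exact ha n
        · exact hα n.le_succ

lemma sum_weighted_error_le {α e a : ℕ → ℝ} {c Γ γ M : ℝ} (hα : Antitone α)
    (hα0 : ∀ k, 0 ≤ α k) (ha : ∀ k, 0 ≤ a k) (hc : 0 ≤ c) (hΓ : 0 ≤ Γ) (hγ : 0 ≤ γ)
    (hγ1 : γ < 1) {k : ℕ}
    (he : ∀ n, e (n + 1) ≤ 2 * c * γ ^ (n + 1) + Γ * ∑ j ∈ range n, γ ^ (n - j) * a j + a n)
    (hM : ∑ j ∈ range k, α j * a j ≤ M) :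
    ∑ ℓ ∈ range (k + 1), α ℓ * e ℓ
      ≤ α 0 * e 0 + c * (∑ ℓ ∈ range (k + 1), α ℓ ^ 2 + γ ^ 2 / (1 - γ ^ 2))
        + (1 + Γ * γ / (1 - γ)) * M := by
  have hsq : ∑ n ∈ range k, α (n + 1) ^ 2 ≤ ∑ ℓ ∈ range (k + 1), α ℓ ^ 2 := by
    rw [sum_range_succ' (fun ℓ => α ℓ ^ 2)]
    exact le_add_of_nonneg_right (sq_nonneg _)
  have hgeom := sum_range_pow_succ_le (sq_nonneg γ) (by nlinarith) k
  have hconv : ∑ n ∈ range k, ∑ j ∈ range n, γ ^ (n - j) * (α j * a j) ≤ γ / (1 - γ) * M :=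
    (sum_range_sum_range_pow_sub_mul_le hγ hγ1 (fun j => mul_nonneg (hα0 j) (ha j)) k).trans
      (mul_le_mul_of_nonneg_left hM (div_nonneg hγ (sub_nonneg.2 hγ1.le)))
  rw [sum_range_succ']
  calc ∑ n ∈ range k, α (n + 1) * e (n + 1) + α 0 * e 0
      ≤ ∑ n ∈ range k, (c * (α (n + 1) ^ 2 + (γ ^ 2) ^ (n + 1))
          + Γ * ∑ j ∈ range n, γ ^ (n - j) * (α j * a j) + α n * a n) + α 0 * e 0 := by
        gcongr with n
        exact weighted_error_succ_le hα hα0 ha hc hΓ hγ (he n)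
    _ = α 0 * e 0 + c * (∑ n ∈ range k, α (n + 1) ^ 2 + ∑ n ∈ range k, (γ ^ 2) ^ (n + 1))
          + Γ * ∑ n ∈ range k, ∑ j ∈ range n, γ ^ (n - j) * (α j * a j)
          + ∑ n ∈ range k, α n * a n := by
        simp only [sum_add_distrib, ← mul_sum]
        ring
    _ ≤ α 0 * e 0 + c * (∑ ℓ ∈ range (k + 1), α ℓ ^ 2 + γ ^ 2 / (1 - γ ^ 2))
          + Γ * (γ / (1 - γ) * M) + M := by
        gcongr
    _ = _ := by ring

theorem stmt_7_general (α e a : ℕ → ℝ)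
    (hαpos : ∀ k, 0 < α k) (hαmono : ∀ k, α (k + 1) ≤ α k)
    (hann : ∀ k, 0 ≤ a k)
    (N ς Γ γ Φ₁ Ψ₁ : ℝ) (hN : 1 ≤ N) (hς : 0 ≤ ς) (hΓ : 0 < Γ)
    (hγ : γ ∈ Set.Ioo (0 : ℝ) 1)
    (hbound : ∀ k : ℕ, 1 ≤ k →
      e k ≤ 2 * N * ς * Γ * γ ^ k
        + Γ * ∑ r ∈ Icc 1 (k - 1), γ ^ (k - r) * a (r - 1) + a (k - 1))
    (hsum : ∀ K : ℕ, ∑ k ∈ range (K + 1), α k * a k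
      ≤ Φ₁ * ∑ k ∈ range (K + 1), (α k) ^ 2 + Ψ₁) :
    ∀ k : ℕ, 1 ≤ k →
      (∑ ℓ ∈ range (k + 1), α ℓ * e ℓ) / (∑ ℓ ∈ range (k + 1), α ℓ) ≤
        ((∑ ℓ ∈ range (k + 1), (α ℓ) ^ 2) / (∑ ℓ ∈ range (k + 1), α ℓ)) *
            (N * ς * Γ + Φ₁ * (1 + Γ * γ / (1 - γ)))
        + (1 / (∑ ℓ ∈ range (k + 1), α ℓ)) *
            (α 0 * e 0 + N * ς * Γ * γ ^ 2 / (1 - γ ^ 2)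
              + Ψ₁ * (1 + Γ * γ / (1 - γ))) := by
  intro k _
  have hα0 (j : ℕ) : 0 ≤ α j := (hαpos j).le
  have he (n : ℕ) : e (n + 1) ≤ 2 * (N * ς * Γ) * γ ^ (n + 1)
      + Γ * ∑ j ∈ range n, γ ^ (n - j) * a j + a n := by
    have h := hbound (n + 1) n.succ_pos
    simp only [Nat.add_sub_cancel, sum_Icc_one_eq_sum_range, Nat.add_sub_add_right] at h
    linarith
  have hM : ∑ j ∈ range k, α j * a j ≤ Φ₁ * ∑ ℓ ∈ range (k + 1), α ℓ ^ 2 + Ψ₁ := by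
    refine le_trans ?_ (hsum k)
    rw [sum_range_succ]
    exact le_add_of_nonneg_right (mul_nonneg (hα0 k) (hann k))
  have key := sum_weighted_error_le (antitone_nat_of_succ_le hαmono) hα0 hann
    (mul_nonneg (mul_nonneg (by linarith) hς) hΓ.le) hΓ.le hγ.1.le hγ.2 he hM
  rw [div_mul_eq_mul_div, one_div_mul_eq_div, ← add_div]
  exact div_le_div_of_nonneg_right (key.trans_eq (by ring)) (sum_nonneg fun j _ => hα0 j)

/-- Proposition 1-(1): bound on the weighted average of the consensus errors. -/
theorem stmt_7 (α e a : ℕ → ℝ)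
    (hαpos : ∀ k, 0 < α k) (hαmono : ∀ k, α (k + 1) ≤ α k)
    (henn : ∀ k, 0 ≤ e k) (hann : ∀ k, 0 ≤ a k)
    (N ς Γ γ Φ₁ Ψ₁ : ℝ) (hN : 1 ≤ N) (hς : 0 ≤ ς) (hΓ : 0 < Γ)
    (hγ : γ ∈ Set.Ioo (0 : ℝ) 1) (hΦ₁ : 0 ≤ Φ₁) (hΨ₁ : 0 ≤ Ψ₁)
    (hbound : ∀ k : ℕ, 1 ≤ k →
      e k ≤ 2 * N * ς * Γ * γ ^ k
        + Γ * ∑ r ∈ Icc 1 (k - 1), γ ^ (k - r) * a (r - 1) + a (k - 1))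
    (hsum : ∀ K : ℕ, ∑ k ∈ range (K + 1), α k * a k
      ≤ Φ₁ * ∑ k ∈ range (K + 1), (α k) ^ 2 + Ψ₁) :
    ∀ k : ℕ, 1 ≤ k →
      (∑ ℓ ∈ range (k + 1), α ℓ * e ℓ) / (∑ ℓ ∈ range (k + 1), α ℓ) ≤
        ((∑ ℓ ∈ range (k + 1), (α ℓ) ^ 2) / (∑ ℓ ∈ range (k + 1), α ℓ)) *
            (N * ς * Γ + Φ₁ * (1 + Γ * γ / (1 - γ)))
        + (1 / (∑ ℓ ∈ range (k + 1), α ℓ)) *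
            (α 0 * e 0 + N * ς * Γ * γ ^ 2 / (1 - γ ^ 2)
              + Ψ₁ * (1 + Γ * γ / (1 - γ))) :=
  stmt_7_general α e a hαpos hαmono hann N ς Γ γ Φ₁ Ψ₁ hN hς hΓ hγ hbound hsum
end

section
/- Let X ⊆ ℝⁿ be a nonempty closed set, let f : ℝⁿ → ℝ be continuous, let f⋆ = inf_{x∈X} f(x) be finite, and suppose the solution set X⋆ = {x ∈ X : f(x) = f⋆} is nonempty. Let (z_k)_{k≥0} be a sequence in X such that: (i) for every z⋆ ∈ X⋆ the real sequence ‖z_k − z⋆‖ converges; and (ii) liminf_{k→∞} f(z_k) = f⋆. Then there exists x⋆ ∈ X⋆ such that z_k converges to x⋆. -/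
/-!
The distances of `z k` to one minimizer converge, so `(z k)` is bounded and has cluster points.
By compactness, the liminf `f⋆` of `f (z k)` is the value of `f` at a cluster point `x` of
`(z k)`, and `x ∈ X` as `X` is closed; thus `x` is itself a minimizer. Then `‖z k - x‖`
converges, and its limit is `0` because `0` is a cluster value of it, so `z k → x`.
-/

open Filter Topology

theorem MapClusterPt.eq_of_tendsto {α X : Type*} [TopologicalSpace X] [T2Space X]
    {l : Filter α} {u : α → X} {x y : X} (hx : MapClusterPt x l u) (hy : Tendsto u l (𝓝 y)) :
    x = y :=
  eq_of_nhds_neBot (hx.clusterPt.mono hy)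

theorem IsCompact.exists_mapClusterPt_of_mapClusterPt_comp {ι X Y : Type*} [TopologicalSpace X]
    [TopologicalSpace Y] [T2Space Y] {K : Set X} (hK : IsCompact K) {l : Filter ι}
    {u : ι → X} (hu : ∀ᶠ i in l, u i ∈ K) {f : X → Y} (hf : Continuous f) {y : Y}
    (hy : MapClusterPt y l (f ∘ u)) : ∃ x ∈ K, MapClusterPt x l u ∧ f x = y := by
  -- Take a cluster point of `u` along the indices at which `f ∘ u` is close to `y`.
  have : (comap (f ∘ u) (𝓝 y) ⊓ l).NeBot := neBot_inf_comap_iff_map'.2 hy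
  obtain ⟨x, hxK, hx⟩ := hK.exists_mapClusterPt (f := comap (f ∘ u) (𝓝 y) ⊓ l) (u := u)
    (le_principal_iff.2 (mem_map.2 (mem_inf_of_right hu)))
  exact ⟨x, hxK, hx.mono inf_le_right,
    (hx.continuousAt_comp hf.continuousAt).eq_of_tendsto (tendsto_comap.mono_left inf_le_left)⟩

theorem IsCompact.exists_mapClusterPt_liminf_comp {ι X : Type*} [TopologicalSpace X]
    {K : Set X} (hK : IsCompact K) {l : Filter ι} [l.NeBot]
    {u : ι → X} (hu : ∀ᶠ i in l, u i ∈ K) {f : X → ℝ} (hf : Continuous f) :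
    ∃ x ∈ K, MapClusterPt x l u ∧ f x = liminf (f ∘ u) l := by
  obtain ⟨M, hM⟩ := hK.bddAbove_image hf.continuousOn
  obtain ⟨m, hm⟩ := hK.bddBelow_image hf.continuousOn
  have hle : IsBoundedUnder (· ≤ ·) l (f ∘ u) :=
    isBoundedUnder_of_eventually_le (hu.mono fun i hi => hM ⟨u i, hi, rfl⟩)
  have hge : IsBoundedUnder (· ≥ ·) l (f ∘ u) :=
    isBoundedUnder_of_eventually_ge (hu.mono fun i hi => hm ⟨u i, hi, rfl⟩)
  exact hK.exists_mapClusterPt_of_mapClusterPt_comp hu hf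
    (MapClusterPt.liminf hle.isCoboundedUnder_flip hge)

theorem tendsto_of_mapClusterPt_of_tendsto_dist {ι X : Type*} [PseudoMetricSpace X]
    {l : Filter ι} {u : ι → X} {x : X} (hx : MapClusterPt x l u) {L : ℝ}
    (hL : Tendsto (fun i => dist (u i) x) l (𝓝 L)) : Tendsto u l (𝓝 x) := by
  have h0 : MapClusterPt (dist x x) l (fun i => dist (u i) x) :=
    hx.continuousAt_comp (continuous_id.dist continuous_const).continuousAt
  rw [dist_self] at h0
  obtain rfl : 0 = L := h0.eq_of_tendsto hL
  exact tendsto_iff_dist_tendsto_zero.2 hL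

theorem stmt_10_general (n : ℕ) (X : Set (EuclideanSpace ℝ (Fin n)))
    (hXcl : IsClosed X)
    (f : EuclideanSpace ℝ (Fin n) → ℝ) (hf : Continuous f)
    (fstar : ℝ)
    (hXstar : {x | x ∈ X ∧ f x = fstar}.Nonempty)
    (z : ℕ → EuclideanSpace ℝ (Fin n)) (hzX : ∀ k, z k ∈ X)
    (hdist : ∀ zs ∈ {x | x ∈ X ∧ f x = fstar},
      ∃ L : ℝ, Tendsto (fun k => ‖z k - zs‖) atTop (nhds L))
    (hliminf : liminf (fun k => f (z k)) atTop = fstar) :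
    ∃ xs ∈ {x | x ∈ X ∧ f x = fstar}, Tendsto z atTop (nhds xs) := by
  obtain ⟨zs, hzs⟩ := hXstar
  obtain ⟨L, hL⟩ := hdist zs hzs
  obtain ⟨C, hC⟩ := hL.bddAbove_range
  have hzK : ∀ᶠ k in atTop, z k ∈ Metric.closedBall zs C ∩ X := Eventually.of_forall fun k =>
    ⟨by simpa only [Metric.mem_closedBall, dist_eq_norm] using hC ⟨k, rfl⟩, hzX k⟩
  obtain ⟨x, ⟨-, hxX⟩, hxz, hfx⟩ :=
    ((isCompact_closedBall zs C).inter_right hXcl).exists_mapClusterPt_liminf_comp hzK hf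
  have hxs : x ∈ {x | x ∈ X ∧ f x = fstar} := ⟨hxX, hfx.trans hliminf⟩
  obtain ⟨Lx, hLx⟩ := hdist x hxs
  simp_rw [← dist_eq_norm] at hLx
  exact ⟨x, hxs, tendsto_of_mapClusterPt_of_tendsto_dist hxz hLx⟩

/-- Step (C) in Theorem 1: a sequence in `X` whose distances to every optimizer converge
and whose function values have liminf equal to the optimal value converges to an optimizer. -/
theorem stmt_10 (n : ℕ) (X : Set (EuclideanSpace ℝ (Fin n)))
    (hXne : X.Nonempty) (hXcl : IsClosed X)
    (f : EuclideanSpace ℝ (Fin n) → ℝ) (hf : Continuous f)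
    (fstar : ℝ) (hfstar : IsGLB (f '' X) fstar)
    (hXstar : {x | x ∈ X ∧ f x = fstar}.Nonempty)
    (z : ℕ → EuclideanSpace ℝ (Fin n)) (hzX : ∀ k, z k ∈ X)
    (hdist : ∀ zs ∈ {x | x ∈ X ∧ f x = fstar},
      ∃ L : ℝ, Tendsto (fun k => ‖z k - zs‖) atTop (nhds L))
    (hliminf : liminf (fun k => f (z k)) atTop = fstar) :
    ∃ xs ∈ {x | x ∈ X ∧ f x = fstar}, Tendsto z atTop (nhds xs) :=
  stmt_10_general n X hXcl f hf fstar hXstar z hzX hdist hliminf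
end

section
/- Let α > 0, p₁ > 1, p > 1 and C₀, C₁, C₂, C₃, C₄ ≥ 0. For t ≥ 1 define α_k = α/√(k+2) for k = 0,…,t−1 and B_t = (Σ_{k=0}^{t−1} α_k)^{−1} · [C₀ + C₁ Σ_{k=0}^{t−1} α_k² + C₂ Σ_{k=0}^{t−1} α_k (k+2)^{−p₁} + C₃ Σ_{k=0}^{t−1} α_k (k+2)^{−p} + C₄ (Σ_{k=0}^{t−1} α_k²)(Σ_{k=0}^{t−1} (k+2)^{−p})]. Then there exists a constant C > 0 such that for all t ≥ 2: B_t ≤ C · (ln t)/√t. -/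
open Finset

/-!
Each of the `t` step sizes is at least `α / √(2t)`, so the denominator is at least `α √(t/2)`.
In the numerator, `∑ α_k² = α² ∑ 1/(k+2)` is a tail of the harmonic series and hence `O(ln t)`,
while `∑ α_k (k+2)^{-q} ≤ α ∑ (n+2)^{-q}` is bounded for `q > 1`; the bounded terms are absorbed
into `ln t` through `ln t ≥ ln 2`. Together the quotient is `O(ln t / √t)`.
-/

lemma summable_nat_add_two_rpow_neg {q : ℝ} (hq : 1 < q) :
    Summable fun n : ℕ => ((n : ℝ) + 2) ^ (-q) := by
  have := (summable_nat_add_iff 2).mpr (Real.summable_nat_rpow.mpr (neg_lt_neg hq))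
  exact this.congr fun n => by push_cast; rfl

lemma sum_range_inv_add_two_le_log (t : ℕ) :
    ∑ k ∈ range t, ((k : ℝ) + 2)⁻¹ ≤ Real.log (t + 1) := by
  have h := harmonic_le_one_add_log (t + 1)
  rw [harmonic, sum_range_succ'] at h
  push_cast [add_assoc, one_add_one_eq_two] at h
  linarith

lemma sum_range_sq_div_sqrt_le (α : ℝ) {t : ℕ} (ht : 2 ≤ t) :
    ∑ k ∈ range t, (α / √((k : ℝ) + 2)) ^ 2 ≤ 2 * α ^ 2 * Real.log t := by
  have hlog : Real.log (t + 1) ≤ 2 * Real.log t := by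
    have ht' : (2 : ℝ) ≤ t := by exact_mod_cast ht
    have := Real.log_le_log (by positivity) (show (t : ℝ) + 1 ≤ t ^ 2 by nlinarith)
    rwa [Real.log_pow, Nat.cast_ofNat] at this
  calc ∑ k ∈ range t, (α / √((k : ℝ) + 2)) ^ 2
      = α ^ 2 * ∑ k ∈ range t, ((k : ℝ) + 2)⁻¹ := by
        rw [mul_sum]
        refine sum_congr rfl fun k _ => ?_
        rw [div_pow, Real.sq_sqrt (by positivity), div_eq_mul_inv]
    _ ≤ α ^ 2 * (2 * Real.log t) := by
        gcongr
        exact (sum_range_inv_add_two_le_log t).trans hlog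
    _ = 2 * α ^ 2 * Real.log t := by ring

lemma mul_sqrt_div_sqrt_two_le_sum_range {α : ℝ} (hα : 0 ≤ α) {t : ℕ} (ht : 1 ≤ t) :
    α * √t / √2 ≤ ∑ k ∈ range t, α / √((k : ℝ) + 2) := by
  have ht' : (1 : ℝ) ≤ t := by exact_mod_cast ht
  have hterm : ∀ k ∈ range t, α / √(2 * t) ≤ α / √((k : ℝ) + 2) := by
    intro k hk
    have : (k : ℝ) + 1 ≤ t := by exact_mod_cast mem_range.mp hk
    gcongr
    linarith
  calc α * √t / √2 = t * (α / √(2 * t)) := by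
        rw [Real.sqrt_mul zero_le_two]
        field_simp
        rw [Real.sq_sqrt (by positivity)]
    _ ≤ ∑ k ∈ range t, α / √((k : ℝ) + 2) := by
        simpa using card_nsmul_le_sum (range t) _ _ hterm

lemma sum_range_div_sqrt_mul_rpow_le {α q : ℝ} (hα : 0 ≤ α) (hq : 1 < q) (t : ℕ) :
    ∑ k ∈ range t, α / √((k : ℝ) + 2) * ((k : ℝ) + 2) ^ (-q)
      ≤ α * ∑' n : ℕ, ((n : ℝ) + 2) ^ (-q) := by
  calc ∑ k ∈ range t, α / √((k : ℝ) + 2) * ((k : ℝ) + 2) ^ (-q)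
      ≤ ∑ k ∈ range t, α * ((k : ℝ) + 2) ^ (-q) := by
        gcongr with k
        exact div_le_self hα (Real.one_le_sqrt.mpr (by linarith [k.cast_nonneg (α := ℝ)]))
    _ ≤ α * ∑' n : ℕ, ((n : ℝ) + 2) ^ (-q) := by
        rw [← mul_sum]
        gcongr
        exact (summable_nat_add_two_rpow_neg hq).sum_le_tsum _ fun n _ => by positivity

/-- Corollary 1-(1): with diminishing step-size `α_k = α/√(k+2)` the bound is `O(ln t/√t)`. -/
theorem stmt_13 (α p₁ p : ℝ) (hα : 0 < α) (hp₁ : 1 < p₁) (hp : 1 < p)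
    (C₀ C₁ C₂ C₃ C₄ : ℝ) (hC₀ : 0 ≤ C₀) (hC₁ : 0 ≤ C₁) (hC₂ : 0 ≤ C₂)
    (hC₃ : 0 ≤ C₃) (hC₄ : 0 ≤ C₄) :
    ∃ C > (0 : ℝ), ∀ t : ℕ, 2 ≤ t →
      (C₀ + C₁ * ∑ k ∈ range t, (α / Real.sqrt ((k : ℝ) + 2)) ^ 2
          + C₂ * ∑ k ∈ range t, (α / Real.sqrt ((k : ℝ) + 2)) * ((k : ℝ) + 2) ^ (-p₁)
          + C₃ * ∑ k ∈ range t, (α / Real.sqrt ((k : ℝ) + 2)) * ((k : ℝ) + 2) ^ (-p)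
          + C₄ * (∑ k ∈ range t, (α / Real.sqrt ((k : ℝ) + 2)) ^ 2)
              * ∑ k ∈ range t, ((k : ℝ) + 2) ^ (-p))
        / (∑ k ∈ range t, α / Real.sqrt ((k : ℝ) + 2))
      ≤ C * Real.log t / Real.sqrt t := by
  set K₁ := ∑' n : ℕ, ((n : ℝ) + 2) ^ (-p₁)
  set K := ∑' n : ℕ, ((n : ℝ) + 2) ^ (-p)
  have hK₁ : 0 ≤ K₁ := tsum_nonneg fun n => by positivity
  have hK : 0 ≤ K := tsum_nonneg fun n => by positivity
  set A := C₀ + C₂ * (α * K₁) + C₃ * (α * K)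
  set B := 2 * α ^ 2 * (C₁ + C₄ * K)
  set M := A / Real.log 2 + B
  refine ⟨M * √2 / α + 1, by positivity, fun t ht => ?_⟩
  have hlog : Real.log 2 ≤ Real.log t := Real.log_le_log two_pos (by exact_mod_cast ht)
  have hS := sum_range_sq_div_sqrt_le α ht
  refine (div_le_div₀ (c := M * Real.log t) (by positivity) ?_ (by positivity)
    (mul_sqrt_div_sqrt_two_le_sum_range hα.le (by omega))).trans ?_
  · calc _ ≤ C₀ + C₁ * (2 * α ^ 2 * Real.log t) + C₂ * (α * K₁) + C₃ * (α * K)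
            + C₄ * (2 * α ^ 2 * Real.log t) * K := by
          gcongr
          · exact sum_range_div_sqrt_mul_rpow_le hα.le hp₁ t
          · exact sum_range_div_sqrt_mul_rpow_le hα.le hp t
          · exact (summable_nat_add_two_rpow_neg hp).sum_le_tsum _ fun n _ => by positivity
      _ = A + B * Real.log t := by ring
      _ ≤ A / Real.log 2 * Real.log t + B * Real.log t := by
          gcongr
          rw [div_mul_eq_mul_div, le_div_iff₀ (Real.log_pos one_lt_two)]
          gcongr
      _ = M * Real.log t := by ring
  · calc M * Real.log t / (α * √t / √2) = M * √2 / α * Real.log t / √t := by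
          field_simp
      _ ≤ (M * √2 / α + 1) * Real.log t / √t := by gcongr; linarith
end

section
/- Let (Ω, ℱ, ℙ) be a probability space with a filtration (ℱ_k)_{k≥0}, and let (u_k), (v_k), (w_k), (η_k) be nonnegative, integrable, (ℱ_k)-adapted real-valued stochastic processes such that for every k ≥ 0, almost surely E[u_{k+1} | ℱ_k] ≤ (1 + η_k) u_k − v_k + w_k, and such that Σ_{k=0}^{∞} η_k < ∞ almost surely and Σ_{k=0}^{∞} w_k < ∞ almost surely. Then: (1) the sequence (u_k) converges almost surely to a finite limit; and (2) Σ_{k=0}^{∞} v_k < ∞ almost surely. -/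
open MeasureTheory Filter

/-!
Dividing by the accumulated growth `A_k = ∏_{j<k} (1 + η_j)`, which is `ℱ_{k-1}`-measurable, and
compensating the drift turns the hypothesis into the supermartingale property of
`X_k = u_k / A_k + ∑_{j<k} (v_j - w_j) / A_{j+1}`. Since `X_k ≥ -∑_{j<k} w_j`, stopping `X` when the
partial sums of `w` first exceed `c` gives a supermartingale bounded below by `-c`, hence an a.s.
convergent one, and on `{∑ w ≤ c}` it is never stopped. Pathwise, `A_k` increases to a finite limit
on `{∑ η < ∞}`, so convergence of `X` together with `∑ w < ∞` yields that `u` converges and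
`∑ v < ∞`.
-/

open Finset Topology

namespace MeasureTheory

variable {Ω : Type*} {m0 : MeasurableSpace Ω} {μ : Measure Ω} {ℱ : Filtration ℕ m0}
  {f : ℕ → Ω → ℝ}

theorem Supermartingale.stoppedProcess [SigmaFiniteFiltration μ ℱ] {τ : Ω → WithTop ℕ}
    (hf : Supermartingale f ℱ μ) (hτ : IsStoppingTime ℱ τ) :
    Supermartingale (MeasureTheory.stoppedProcess f τ) ℱ μ := by
  simpa [stoppedProcess_neg] using (hf.neg.stoppedProcess hτ).neg

theorem Supermartingale.exists_ae_tendsto_of_bddBelow [IsFiniteMeasure μ] {c : ℝ}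
    (hf : Supermartingale f ℱ μ) (hc : ∀ n ω, c ≤ f n ω) :
    ∀ᵐ ω ∂μ, ∃ l, Tendsto (f · ω) atTop (𝓝 l) := by
  set R := ∫ ω, f 0 ω ∂μ + μ.real Set.univ * (2 * |c|)
  have hL1 n : ∫ ω, |f n ω| ∂μ ≤ R := calc
    ∫ ω, |f n ω| ∂μ ≤ ∫ ω, (f n ω + 2 * |c|) ∂μ :=
      integral_mono (hf.integrable n).abs ((hf.integrable n).add (integrable_const _))
        fun ω => abs_le.2 ⟨by linarith [neg_abs_le c, hc n ω], by linarith [abs_nonneg c]⟩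
    _ = ∫ ω, f n ω ∂μ + μ.real Set.univ * (2 * |c|) := by
      rw [integral_add (hf.integrable n) (integrable_const _), integral_const, smul_eq_mul]
    _ ≤ ∫ ω, f 0 ω ∂μ + μ.real Set.univ * (2 * |c|) := by
      simpa using hf.setIntegral_le n.zero_le MeasurableSet.univ
  have hbdd n : eLpNorm ((-f) n) 1 μ ≤ R.toNNReal := by
    rw [Pi.neg_apply, eLpNorm_neg, eLpNorm_one_eq_lintegral_enorm,
      ← ofReal_integral_norm_eq_lintegral_enorm (hf.integrable n)]
    exact ENNReal.ofReal_le_ofReal (hL1 n)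
  filter_upwards [hf.neg.exists_ae_tendsto_of_bdd hbdd] with ω ⟨l, hl⟩
  exact ⟨-l, by simpa using hl.neg⟩

lemma sum_range_le_of_le_hittingAfter {w : ℕ → Ω → ℝ} {c : ℝ} (hc : 0 ≤ c) {ω : Ω} {m : ℕ}
    (hm : m ≤ hittingAfter (fun k ω => ∑ j ∈ range (k + 1), w j ω) (Set.Ioi c) 0 ω) :
    ∑ j ∈ range m, w j ω ≤ c := by
  cases m with
  | zero => simpa using hc
  | succ i =>
    have hi : (i : WithTop ℕ) < hittingAfter _ _ 0 ω :=
      lt_of_lt_of_le (by exact_mod_cast i.lt_succ_self) hm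
    simpa using notMem_of_lt_hittingAfter hi i.zero_le

lemma neg_le_stoppedProcess_hittingAfter {w : ℕ → Ω → ℝ} {c : ℝ} (hc : 0 ≤ c)
    (hf_ge : ∀ k ω, -∑ j ∈ range k, w j ω ≤ f k ω) (n : ℕ) (ω : Ω) :
    -c ≤ stoppedProcess f
      (hittingAfter (fun k ω => ∑ j ∈ range (k + 1), w j ω) (Set.Ioi c) 0) n ω := by
  set τ := hittingAfter (fun k ω => ∑ j ∈ range (k + 1), w j ω) (Set.Ioi c) 0
  have hbound (m : ℕ) (hm : (m : WithTop ℕ) ≤ τ ω) : -c ≤ f m ω :=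
    (neg_le_neg (sum_range_le_of_le_hittingAfter hc hm)).trans (hf_ge m ω)
  -- `(n : WithTop ℕ)` elaborates to `Nat.cast`, hence the explicit `(i := n)` below.
  rcases le_or_gt (n : WithTop ℕ) (τ ω) with hn | hn
  · rw [stoppedProcess_eq_of_le (i := n) hn]
    exact hbound n hn
  · obtain ⟨t, ht⟩ := WithTop.ne_top_iff_exists.1 (hn.trans (WithTop.coe_lt_top n)).ne
    rw [stoppedProcess_eq_of_ge (i := n) hn.le, ← ht]
    exact hbound t ht.le

theorem Supermartingale.ae_exists_tendsto_of_neg_sum_le [IsFiniteMeasure μ] {w : ℕ → Ω → ℝ}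
    (hf : Supermartingale f ℱ μ) (hw : Adapted ℱ w)
    (hf_ge : ∀ k ω, -∑ j ∈ range k, w j ω ≤ f k ω) :
    ∀ᵐ ω ∂μ, Summable (w · ω) → ∃ l, Tendsto (f · ω) atTop (𝓝 l) := by
  set S : ℕ → Ω → ℝ := fun k ω => ∑ j ∈ range (k + 1), w j ω
  have hS : Adapted ℱ S := fun k =>
    Finset.measurable_sum _ fun j hj =>
      (hw j).mono (ℱ.mono (Nat.lt_succ_iff.1 (mem_range.1 hj))) le_rfl
  have hstopped (c : ℕ) : ∀ᵐ ω ∂μ, ∃ l, Tendsto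
      (MeasureTheory.stoppedProcess f (hittingAfter S (Set.Ioi (c : ℝ)) 0) · ω) atTop (𝓝 l) :=
    (hf.stoppedProcess (hS.isStoppingTime_hittingAfter measurableSet_Ioi))
      |>.exists_ae_tendsto_of_bddBelow (neg_le_stoppedProcess_hittingAfter c.cast_nonneg hf_ge)
  filter_upwards [ae_all_iff.2 hstopped] with ω hω hsum
  obtain ⟨b, hb⟩ := (hsum.hasSum.tendsto_sum_nat.comp (tendsto_add_atTop_nat 1)).bddAbove_range
  obtain ⟨c, hc⟩ := exists_nat_ge b
  have hτ : hittingAfter S (Set.Ioi (c : ℝ)) 0 ω = ⊤ :=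
    hittingAfter_eq_top_iff.2 fun k _ => not_lt.2 ((hb ⟨k, rfl⟩).trans hc)
  obtain ⟨l, hl⟩ := hω c
  exact ⟨l, by simpa [stoppedProcess_eq_of_le, hτ] using hl⟩

end MeasureTheory

namespace RobbinsSiegmund

noncomputable def growth (η : ℕ → ℝ) (k : ℕ) : ℝ := ∏ j ∈ range k, (1 + η j)

section Deterministic

variable {η : ℕ → ℝ}

lemma growth_succ (η : ℕ → ℝ) (k : ℕ) : growth η (k + 1) = growth η k * (1 + η k) :=
  prod_range_succ _ _

lemma one_le_growth (hη : ∀ k, 0 ≤ η k) (k : ℕ) : 1 ≤ growth η k :=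
  one_le_prod fun j _ => le_add_of_nonneg_right (hη j)

lemma growth_pos (hη : ∀ k, 0 ≤ η k) (k : ℕ) : 0 < growth η k :=
  one_pos.trans_le (one_le_growth hη k)

lemma monotone_growth (hη : ∀ k, 0 ≤ η k) : Monotone (growth η) :=
  monotone_nat_of_le_succ fun k => by
    rw [growth_succ]
    exact le_mul_of_one_le_right (growth_pos hη k).le (le_add_of_nonneg_right (hη k))

lemma growth_le_exp_tsum (hη : ∀ k, 0 ≤ η k) (hs : Summable η) (k : ℕ) :
    growth η k ≤ Real.exp (∑' j, η j) :=
  (Real.prod_one_add_le_exp_sum _ hη).trans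
    (Real.exp_le_exp.2 (hs.sum_le_tsum _ fun j _ => hη j))

lemma exists_tendsto_growth (hη : ∀ k, 0 ≤ η k) (hs : Summable η) :
    ∃ a, Tendsto (growth η) atTop (𝓝 a) :=
  ⟨_, tendsto_atTop_ciSup (monotone_growth hη)
    ⟨_, Set.forall_mem_range.2 (growth_le_exp_tsum hη hs)⟩⟩

theorem exists_tendsto_and_summable_of_tendsto_discounted {u v w A : ℕ → ℝ} {a L : ℝ}
    (hu : ∀ k, 0 ≤ u k) (hv : ∀ k, 0 ≤ v k) (hw : ∀ k, 0 ≤ w k) (hws : Summable w)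
    (hA : ∀ k, 1 ≤ A k) (hA_lim : Tendsto A atTop (𝓝 a))
    (hX : Tendsto (fun k => u k / A k + ∑ j ∈ range k, (v j - w j) / A (j + 1)) atTop (𝓝 L)) :
    (∃ l, Tendsto u atTop (𝓝 l)) ∧ Summable v := by
  have hA_pos k : 0 < A k := one_pos.trans_le (hA k)
  have hw' : Summable fun j => w j / A (j + 1) :=
    hws.of_nonneg_of_le (fun j => div_nonneg (hw j) (hA_pos _).le)
      fun j => div_le_self (hw j) (hA _)
  set T := fun k => u k / A k + ∑ j ∈ range k, v j / A (j + 1)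
  have hT : Tendsto T atTop (𝓝 (L + ∑' j, w j / A (j + 1))) := by
    convert hX.add hw'.hasSum.tendsto_sum_nat using 1
    funext k
    simp only [T, sub_div, sum_sub_distrib]
    ring
  obtain ⟨c, hc⟩ := hT.bddAbove_range
  have hv' : Summable fun j => v j / A (j + 1) :=
    summable_of_sum_range_le (fun j => div_nonneg (hv j) (hA_pos _).le) fun k =>
      (le_add_of_nonneg_left (div_nonneg (hu k) (hA_pos k).le)).trans (hc ⟨k, rfl⟩)
  have hu' := hT.sub hv'.hasSum.tendsto_sum_nat
  simp only [T, add_sub_cancel_right] at hu'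
  refine ⟨⟨_, by simpa [div_mul_cancel₀ _ (hA_pos _).ne'] using hu'.mul hA_lim⟩, ?_⟩
  obtain ⟨M, hM⟩ := hA_lim.bddAbove_range
  refine (hv'.mul_left M).of_nonneg_of_le hv fun j => ?_
  rw [mul_div_assoc', le_div_iff₀ (hA_pos _), mul_comm M]
  exact mul_le_mul_of_nonneg_left (hM ⟨j + 1, rfl⟩) (hv j)

end Deterministic

section Stochastic

variable {Ω : Type*} {m0 : MeasurableSpace Ω} {μ : Measure Ω} {ℱ : Filtration ℕ m0}
  {u v w η : ℕ → Ω → ℝ}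

noncomputable def compensator (v w η : ℕ → Ω → ℝ) (k : ℕ) (ω : Ω) : ℝ :=
  ∑ j ∈ range k, (v j ω - w j ω) / growth (η · ω) (j + 1)

noncomputable def discounted (u v w η : ℕ → Ω → ℝ) (k : ℕ) (ω : Ω) : ℝ :=
  u k ω / growth (η · ω) k + compensator v w η k ω

lemma compensator_succ (v w η : ℕ → Ω → ℝ) (k : ℕ) (ω : Ω) :
    compensator v w η (k + 1) ω =
      compensator v w η k ω + (v k ω - w k ω) / growth (η · ω) (k + 1) :=
  sum_range_succ _ _

lemma measurable_growth (hη : Adapted ℱ η) {k n : ℕ} (hk : k ≤ n + 1) :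
    Measurable[ℱ n] fun ω => growth (η · ω) k :=
  Finset.measurable_prod _ fun j hj =>
    measurable_const.add ((hη j).mono (ℱ.mono (by have := mem_range.1 hj; omega)) le_rfl)

lemma measurable_compensator (hv : Adapted ℱ v) (hw : Adapted ℱ w) (hη : Adapted ℱ η)
    {k n : ℕ} (hk : k ≤ n + 1) : Measurable[ℱ n] (compensator v w η k) := by
  refine Finset.measurable_sum _ fun j hj => ?_
  have hjn : j ≤ n := by have := mem_range.1 hj; omega
  exact (((hv j).mono (ℱ.mono hjn) le_rfl).sub ((hw j).mono (ℱ.mono hjn) le_rfl)).div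
    (measurable_growth hη (by omega))

lemma adapted_discounted (hu : Adapted ℱ u) (hv : Adapted ℱ v) (hw : Adapted ℱ w)
    (hη : Adapted ℱ η) : Adapted ℱ (discounted u v w η) := fun k =>
  ((hu k).div (measurable_growth hη k.le_succ)).add (measurable_compensator hv hw hη k.le_succ)

lemma integrable_div_growth {f : Ω → ℝ} (hf : Integrable f μ) (hη : Adapted ℱ η)
    (hη_nn : ∀ k ω, 0 ≤ η k ω) (k : ℕ) :
    Integrable (fun ω => f ω / growth (η · ω) k) μ := by
  simp_rw [div_eq_mul_inv]
  refine hf.mul_bdd (c := 1)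
    ((measurable_growth hη k.le_succ).mono (ℱ.le k) le_rfl).inv.aestronglyMeasurable
    (ae_of_all _ fun ω => ?_)
  rw [norm_inv, Real.norm_of_nonneg (growth_pos (hη_nn · ω) k).le]
  exact inv_le_one_of_one_le₀ (one_le_growth (hη_nn · ω) k)

lemma integrable_compensator (hv : ∀ k, Integrable (v k) μ) (hw : ∀ k, Integrable (w k) μ)
    (hη : Adapted ℱ η) (hη_nn : ∀ k ω, 0 ≤ η k ω) (k : ℕ) :
    Integrable (compensator v w η k) μ := by
  unfold compensator
  exact integrable_finsetSum _ fun j _ => integrable_div_growth ((hv j).sub (hw j)) hη hη_nn _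

lemma integrable_discounted (hu : ∀ k, Integrable (u k) μ) (hv : ∀ k, Integrable (v k) μ)
    (hw : ∀ k, Integrable (w k) μ) (hη : Adapted ℱ η) (hη_nn : ∀ k ω, 0 ≤ η k ω) (k : ℕ) :
    Integrable (discounted u v w η k) μ :=
  (integrable_div_growth (hu k) hη hη_nn k).add (integrable_compensator hv hw hη hη_nn k)

lemma neg_sum_le_discounted (hu : ∀ k ω, 0 ≤ u k ω) (hv : ∀ k ω, 0 ≤ v k ω)
    (hw : ∀ k ω, 0 ≤ w k ω) (hη : ∀ k ω, 0 ≤ η k ω) (k : ℕ) (ω : Ω) :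
    -∑ j ∈ range k, w j ω ≤ discounted u v w η k ω := by
  have hterm (j : ℕ) : -w j ω ≤ (v j ω - w j ω) / growth (η · ω) (j + 1) := by
    have hA := one_le_growth (hη · ω) (j + 1)
    rw [sub_div]
    linarith [div_nonneg (hv j ω) (zero_le_one.trans hA), div_le_self (hw j ω) hA]
  rw [← sum_neg_distrib]
  exact le_add_of_nonneg_of_le (div_nonneg (hu k ω) (growth_pos (hη · ω) k).le)
    (sum_le_sum fun j _ => hterm j)

theorem supermartingale_discounted [IsFiniteMeasure μ]
    (hu_int : ∀ k, Integrable (u k) μ) (hv_int : ∀ k, Integrable (v k) μ)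
    (hw_int : ∀ k, Integrable (w k) μ) (hη_nn : ∀ k ω, 0 ≤ η k ω)
    (hu : Adapted ℱ u) (hv : Adapted ℱ v) (hw : Adapted ℱ w) (hη : Adapted ℱ η)
    (hrec : ∀ k, ∀ᵐ ω ∂μ, μ[u (k + 1)|ℱ k] ω ≤ (1 + η k ω) * u k ω - v k ω + w k ω) :
    Supermartingale (discounted u v w η) ℱ μ := by
  refine supermartingale_nat (fun k => (adapted_discounted hu hv hw hη k).stronglyMeasurable)
    (integrable_discounted hu_int hv_int hw_int hη hη_nn) fun k => ?_
  set B : Ω → ℝ := fun ω => (growth (η · ω) (k + 1))⁻¹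
  have hB : Measurable[ℱ k] B := (measurable_growth hη le_rfl).inv
  have hsplit : discounted u v w η (k + 1) = B * u (k + 1) + compensator v w η (k + 1) := by
    funext ω
    simp only [discounted, B, Pi.add_apply, Pi.mul_apply, div_eq_inv_mul]
  have hBu : Integrable (B * u (k + 1)) μ :=
    (integrable_div_growth (hu_int (k + 1)) hη hη_nn (k + 1)).congr
      (ae_of_all _ fun ω => div_eq_inv_mul _ _)
  have hcond : μ[discounted u v w η (k + 1)|ℱ k] =ᵐ[μ]
      B * μ[u (k + 1)|ℱ k] + compensator v w η (k + 1) := by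
    rw [hsplit]
    filter_upwards [condExp_add hBu (integrable_compensator hv_int hw_int hη hη_nn (k + 1)) (ℱ k),
      condExp_mul_of_stronglyMeasurable_left hB.stronglyMeasurable hBu (hu_int (k + 1))]
      with ω h_add h_mul
    rw [h_add, Pi.add_apply, h_mul, condExp_of_stronglyMeasurable (ℱ.le k)
      (measurable_compensator hv hw hη le_rfl).stronglyMeasurable
      (integrable_compensator hv_int hw_int hη hη_nn (k + 1))]
    rfl
  filter_upwards [hcond, hrec k] with ω h_eq h_le
  have h1 : 0 < 1 + η k ω := by linarith [hη_nn k ω]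
  have hA := growth_pos (hη_nn · ω) k
  rw [h_eq, Pi.add_apply, Pi.mul_apply, compensator_succ]
  simp only [discounted, B, growth_succ]
  calc _ ≤ (growth (η · ω) k * (1 + η k ω))⁻¹ * ((1 + η k ω) * u k ω - v k ω + w k ω) +
        (compensator v w η k ω + (v k ω - w k ω) / (growth (η · ω) k * (1 + η k ω))) := by
        gcongr
    _ = _ := by field_simp; ring

end Stochastic

end RobbinsSiegmund

theorem stmt_19_general {Ω : Type*} {m0 : MeasurableSpace Ω} (ℙ : Measure Ω)
    [IsProbabilityMeasure ℙ] (ℱ : Filtration ℕ m0)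
    (u v w η : ℕ → Ω → ℝ)
    (hu_nn : ∀ k ω, 0 ≤ u k ω) (hv_nn : ∀ k ω, 0 ≤ v k ω)
    (hw_nn : ∀ k ω, 0 ≤ w k ω) (hη_nn : ∀ k ω, 0 ≤ η k ω)
    (hu_int : ∀ k, Integrable (u k) ℙ) (hv_int : ∀ k, Integrable (v k) ℙ)
    (hw_int : ∀ k, Integrable (w k) ℙ)
    (hu_adp : Adapted ℱ u) (hv_adp : Adapted ℱ v)
    (hw_adp : Adapted ℱ w) (hη_adp : Adapted ℱ η)
    (hrec : ∀ k, ∀ᵐ ω ∂ℙ,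
      (ℙ[u (k + 1)|ℱ k]) ω ≤ (1 + η k ω) * u k ω - v k ω + w k ω)
    (hη_sum : ∀ᵐ ω ∂ℙ, Summable fun k => η k ω)
    (hw_sum : ∀ᵐ ω ∂ℙ, Summable fun k => w k ω) :
    (∀ᵐ ω ∂ℙ, ∃ L : ℝ, Tendsto (fun k => u k ω) atTop (nhds L)) ∧
      (∀ᵐ ω ∂ℙ, Summable fun k => v k ω) := by
  have hX := RobbinsSiegmund.supermartingale_discounted hu_int hv_int hw_int hη_nn
    hu_adp hv_adp hw_adp hη_adp hrec
  have hX_lim := hX.ae_exists_tendsto_of_neg_sum_le hw_adp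
    (RobbinsSiegmund.neg_sum_le_discounted hu_nn hv_nn hw_nn hη_nn)
  have hpath : ∀ᵐ ω ∂ℙ, (∃ L : ℝ, Tendsto (u · ω) atTop (𝓝 L)) ∧ Summable (v · ω) := by
    filter_upwards [hX_lim, hη_sum, hw_sum] with ω hXω hηω hwω
    obtain ⟨_, hX_tendsto⟩ := hXω hwω
    obtain ⟨_, hA_tendsto⟩ := RobbinsSiegmund.exists_tendsto_growth (hη_nn · ω) hηω
    exact RobbinsSiegmund.exists_tendsto_and_summable_of_tendsto_discounted (hu_nn · ω)
      (hv_nn · ω) (hw_nn · ω) hwω (RobbinsSiegmund.one_le_growth (hη_nn · ω)) hA_tendsto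
      hX_tendsto
  exact ⟨hpath.mono fun _ h => h.1, hpath.mono fun _ h => h.2⟩

/-- Robbins–Siegmund lemma: if `E[u_{k+1} | ℱ_k] ≤ (1 + η_k) u_k − v_k + w_k` a.s. with
`Σ η_k < ∞` a.s. and `Σ w_k < ∞` a.s., then `u_k` converges a.s. and `Σ v_k < ∞` a.s. -/
theorem stmt_19 {Ω : Type*} {m0 : MeasurableSpace Ω} (ℙ : Measure Ω)
    [IsProbabilityMeasure ℙ] (ℱ : Filtration ℕ m0)
    (u v w η : ℕ → Ω → ℝ)
    (hu_nn : ∀ k ω, 0 ≤ u k ω) (hv_nn : ∀ k ω, 0 ≤ v k ω)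
    (hw_nn : ∀ k ω, 0 ≤ w k ω) (hη_nn : ∀ k ω, 0 ≤ η k ω)
    (hu_int : ∀ k, Integrable (u k) ℙ) (hv_int : ∀ k, Integrable (v k) ℙ)
    (hw_int : ∀ k, Integrable (w k) ℙ) (hη_int : ∀ k, Integrable (η k) ℙ)
    (hu_adp : Adapted ℱ u) (hv_adp : Adapted ℱ v)
    (hw_adp : Adapted ℱ w) (hη_adp : Adapted ℱ η)
    (hrec : ∀ k, ∀ᵐ ω ∂ℙ,
      (ℙ[u (k + 1)|ℱ k]) ω ≤ (1 + η k ω) * u k ω - v k ω + w k ω)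
    (hη_sum : ∀ᵐ ω ∂ℙ, Summable fun k => η k ω)
    (hw_sum : ∀ᵐ ω ∂ℙ, Summable fun k => w k ω) :
    (∀ᵐ ω ∂ℙ, ∃ L : ℝ, Tendsto (fun k => u k ω) atTop (nhds L)) ∧
      (∀ᵐ ω ∂ℙ, Summable fun k => v k ω) :=
  stmt_19_general ℙ ℱ u v w η hu_nn hv_nn hw_nn hη_nn hu_int hv_int hw_int hu_adp hv_adp hw_adp
    hη_adp hrec hη_sum hw_sum
end
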